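/- arXiv:1701.08323 — 3 statements merged into one kernel-verified Lean document; each statement's English description precedes it below -/
import Mathlib

section
/- Let φ: ℝ/ℤ → ℝ be a smooth function with ∫₀¹ φ(x) dx = 1, φ(x) = φ(1-x), and with all Fourier coefficients ∫₀¹ φ(x) e^{2πikx} dx > 0 for every k ≥ 1. Then a sequence (x_n) in ℝ/ℤ is uniformly distributed if and only if lim_{N→∞} (1/N²) Σ_{m,n=1}^N φ(x_n - x_m) = 1. -/
open Real Filter Finset


section Aux
open Complex

private lemma fc_step {ψ ψ' : ℝ → ℂ} (hd : ∀ t, HasDerivAt ψ (ψ' t) t)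
    (hc : Continuous ψ') (hp : ψ 1 = ψ 0) {n : ℤ} (hn : n ≠ 0) :
    fourierCoeffOn zero_lt_one ψ n = 1 / (2 * ↑π * I * n) * fourierCoeffOn zero_lt_one ψ' n := by
  rw [fourierCoeffOn_of_hasDerivAt zero_lt_one hn (fun t _ => hd t)
    (hc.intervalIntegrable 0 1), hp]
  have h2 : (2 * ↑π * I * (n:ℂ)) ≠ 0 := by
    simp [Real.pi_ne_zero, I_ne_zero, hn]
  field_simp
  simp

private lemma fc_norm_le {ψ : ℝ → ℂ} {C : ℝ}
    (hC : ∀ t ∈ Set.Icc (0:ℝ) 1, ‖ψ t‖ ≤ C) (n : ℤ) :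
    ‖fourierCoeffOn zero_lt_one ψ n‖ ≤ C := by
  rw [fourierCoeffOn_eq_integral]
  have : ‖∫ x in (0:ℝ)..1, fourier (-n) (x : AddCircle (1-0:ℝ)) • ψ x‖ ≤ C * |1 - 0| := by
    apply intervalIntegral.norm_integral_le_of_norm_le_const
    intro t ht
    rw [Set.uIoc_of_le zero_le_one] at ht
    rw [norm_smul]
    have h1 : ‖fourier (-n) ((t:ℝ) : AddCircle (1-0:ℝ))‖ = 1 := by
      rw [fourier_coe_apply]
      simp [Complex.norm_exp]
    rw [h1, one_mul]
    exact hC t ⟨le_of_lt ht.1, ht.2⟩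
  simpa using this.trans_eq (by norm_num)

private lemma fc_summable {ψ ψ' ψ'' : ℝ → ℂ}
    (hd : ∀ t, HasDerivAt ψ (ψ' t) t) (hd' : ∀ t, HasDerivAt ψ' (ψ'' t) t)
    (hc'' : Continuous ψ'') (hp : ψ 1 = ψ 0) (hp' : ψ' 1 = ψ' 0) :
    Summable (fourierCoeffOn zero_lt_one ψ) := by
  have hc' : Continuous ψ' := by
    have : Differentiable ℝ ψ' := fun t => (hd' t).differentiableAt
    exact this.continuous
  obtain ⟨C, hC⟩ := (isCompact_Icc (a := (0:ℝ)) (b := 1)).exists_bound_of_continuousOn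
    hc''.continuousOn
  have key : ∀ n : ℤ, n ≠ 0 →
      ‖fourierCoeffOn zero_lt_one ψ n‖ ≤ C / (2*π)^2 * (1 / (n:ℝ)^2) := by
    intro n hn
    rw [fc_step hd hc' hp hn, fc_step hd' hc'' hp' hn]
    rw [norm_mul, norm_mul]
    have hnorm : ‖1 / (2 * (π:ℂ) * I * n)‖ = 1 / (2*π*|(n:ℝ)|) := by
      simp [norm_div, Complex.norm_I, _root_.abs_of_nonneg Real.pi_pos.le, abs_mul]
    rw [hnorm]
    have h1 : ‖fourierCoeffOn zero_lt_one ψ'' n‖ ≤ C := fc_norm_le hC n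
    have h2 : (0:ℝ) < 2*π*|(n:ℝ)| := by
      have : (0:ℝ) < |(n:ℝ)| := by
        simp [abs_pos]
        exact_mod_cast hn
      positivity
    calc 1 / (2*π*|(n:ℝ)|) * (1 / (2*π*|(n:ℝ)|) * ‖fourierCoeffOn zero_lt_one ψ'' n‖)
        ≤ 1 / (2*π*|(n:ℝ)|) * (1 / (2*π*|(n:ℝ)|) * C) := by
          apply mul_le_mul_of_nonneg_left (mul_le_mul_of_nonneg_left h1 (by positivity)) (by positivity)
      _ = C / (2*π)^2 * (1 / (n:ℝ)^2) := by
          rw [← _root_.sq_abs (n:ℝ)]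
          field_simp
  apply Summable.of_norm_bounded_eventually (g := fun n : ℤ => C / (2*π)^2 * (1 / (n:ℝ)^2))
  · exact (summable_one_div_int_pow.mpr one_lt_two).mul_left _
  · have hfin : Set.Finite {(0:ℤ)} := Set.finite_singleton 0
    filter_upwards [Set.Finite.eventually_cofinite_notMem hfin] with n hn
    exact key n (by simpa using hn)

private lemma phi_expansion {φ : ℝ → ℝ} (hsmooth : ContDiff ℝ (⊤ : ℕ∞) φ)
    (hper : Function.Periodic φ 1) :
    Summable (fourierCoeffOn zero_lt_one (fun t => (φ t : ℂ))) ∧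
    ∀ t : ℝ, HasSum (fun k : ℤ => fourierCoeffOn zero_lt_one (fun s => (φ s : ℂ)) k *
      Complex.exp (2 * (π:ℂ) * Complex.I * (k:ℂ) * (t:ℂ))) ((φ t : ℝ) : ℂ) := by
  have hs : ContDiff ℝ (⊤:ℕ∞) φ := hsmooth.of_le (by simp)
  set g : ℝ → ℂ := fun t => (φ t : ℂ) with hgdef
  have hφ1 : ContDiff ℝ (⊤:ℕ∞) (deriv φ) := (contDiff_infty_iff_deriv.mp hs).2
  have hd : ∀ t, HasDerivAt g (((deriv φ t : ℝ) : ℂ)) t :=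
    fun t => ((hs.differentiable (by simp) t).hasDerivAt).ofReal_comp
  have hd' : ∀ t, HasDerivAt (fun t => ((deriv φ t : ℝ) : ℂ)) (((deriv (deriv φ) t : ℝ) : ℂ)) t :=
    fun t => ((hφ1.differentiable (by simp) t).hasDerivAt).ofReal_comp
  have hc'' : Continuous (fun t => ((deriv (deriv φ) t : ℝ) : ℂ)) :=
    Complex.continuous_ofReal.comp (contDiff_infty_iff_deriv.mp hφ1).2.continuous
  have hper1 : Function.Periodic (deriv φ) 1 := by
    intro t
    have : deriv (fun y => φ (y + 1)) t = deriv φ (t + 1) := by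
      simpa using deriv_comp_add_const φ 1 t
    rw [← this]
    congr 1
    exact funext fun y => hper y
  have hp : g 1 = g 0 := by simp [hgdef, ← hper 0]
  have hp' : (fun t => ((deriv φ t : ℝ) : ℂ)) 1 = (fun t => ((deriv φ t : ℝ) : ℂ)) 0 := by
    simp [← hper1 0]
  have hsum : Summable (fourierCoeffOn zero_lt_one g) := fc_summable hd hd' hc'' hp hp'
  refine ⟨hsum, fun t => ?_⟩
  have gper : Function.Periodic g 1 := fun s => by simp [hgdef, hper s]
  set F : C(AddCircle (1:ℝ), ℂ) :=
    ⟨gper.lift, continuous_coinduced_dom.mpr (Complex.continuous_ofReal.comp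
      (hsmooth.continuous))⟩ with hF
  have hFcoe : ∀ s : ℝ, F (s : AddCircle (1:ℝ)) = g s := fun s => gper.lift_coe s
  have hcoeff : ∀ n : ℤ, fourierCoeff (⇑F) n = fourierCoeffOn zero_lt_one g n := by
    intro n
    rw [fourierCoeff_eq_intervalIntegral (⇑F) n 0, fourierCoeffOn_eq_integral]
    norm_num
    apply intervalIntegral.integral_congr
    intro s _
    simp only [hFcoe, fourier_coe_apply]
  have hsumF : Summable (fourierCoeff (⇑F)) := by
    rw [funext hcoeff]; exact hsum
  have := has_pointwise_sum_fourier_series_of_summable hsumF (t : AddCircle (1:ℝ))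
  rw [hFcoe] at this
  convert this using 2 with k
  rw [hcoeff, smul_eq_mul, fourier_coe_apply]
  norm_num

-- J m := ∫₀¹ φ(x) e^{2πimx} dx
private lemma coeff_props {φ : ℝ → ℝ} (hper : Function.Periodic φ 1)
    (hint : ∫ x in (0:ℝ)..1, φ x = 1)
    (hsym : ∀ x : ℝ, φ x = φ (1 - x))
    (hpos : ∀ k : ℕ, 1 ≤ k →
      0 < (∫ x in (0:ℝ)..1, (φ x : ℂ) *
        Complex.exp (2 * (π : ℂ) * Complex.I * (k : ℂ) * (x : ℂ))).re)
    (hcont : Continuous φ) :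
    fourierCoeffOn zero_lt_one (fun t => (φ t : ℂ)) 0 = 1 ∧
    ∀ k : ℤ, k ≠ 0 → 0 < (fourierCoeffOn zero_lt_one (fun t => (φ t : ℂ)) k).re := by
  set J : ℤ → ℂ := fun m => ∫ x in (0:ℝ)..1, (φ x : ℂ) *
    Complex.exp (2 * (π:ℂ) * I * (m:ℂ) * (x:ℂ)) with hJ
  have hcJ : ∀ n : ℤ, fourierCoeffOn zero_lt_one (fun t => (φ t : ℂ)) n = J (-n) := by
    intro n
    rw [fourierCoeffOn_eq_integral]
    norm_num
    apply intervalIntegral.integral_congr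
    intro s _
    simp only [fourier_coe_apply]
    push_cast
    norm_num
    rw [← Complex.exp_conj, mul_comm]
    congr 2
    simp only [map_mul, Complex.conj_I, Complex.conj_ofReal, map_intCast, map_ofNat]
    ring
  have hexp1 : ∀ m : ℤ, Complex.exp (2 * (π:ℂ) * I * (m:ℂ)) = 1 := by
    intro m
    rw [show (2 * (π:ℂ) * I * (m:ℂ)) = (m:ℂ) * (2 * π * I) by ring,
      Complex.exp_int_mul_two_pi_mul_I]
  have hJsym : ∀ m : ℤ, J m = J (-m) := by
    intro m
    set G : ℝ → ℂ := fun u => (φ u : ℂ) *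
      Complex.exp (2 * (π:ℂ) * I * (m:ℂ) * (1 - (u:ℂ))) with hG
    have key : ∀ s : ℝ, G (1 - s) = (φ s : ℂ) *
        Complex.exp (2 * (π:ℂ) * I * (m:ℂ) * (s:ℂ)) := by
      intro s
      simp only [hG]
      rw [← hsym s]
      push_cast
      ring_nf
    have h1 : J m = ∫ s in (0:ℝ)..1, G (1 - s) := by
      apply intervalIntegral.integral_congr
      intro s _
      simp only [key s]
    have h2 : (∫ s in (0:ℝ)..1, G (1 - s)) = ∫ s in (0:ℝ)..1, G s := by
      rw [intervalIntegral.integral_comp_sub_left G 1]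
      norm_num
    have h3 : ∀ u : ℝ, G u = Complex.exp (2 * (π:ℂ) * I * (m:ℂ)) *
        ((φ u : ℂ) * Complex.exp (2 * (π:ℂ) * I * ((-m : ℤ):ℂ) * (u:ℂ))) := by
      intro u
      simp only [hG]
      push_cast
      ring_nf
      rw [Complex.exp_sub, Complex.exp_neg]
      ring
    rw [h1, h2]
    calc (∫ s in (0:ℝ)..1, G s)
        = ∫ s in (0:ℝ)..1, Complex.exp (2 * (π:ℂ) * I * (m:ℂ)) *
            ((φ s : ℂ) * Complex.exp (2 * (π:ℂ) * I * ((-m : ℤ):ℂ) * (s:ℂ))) := by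
          apply intervalIntegral.integral_congr; intro s _; exact h3 s
      _ = Complex.exp (2 * (π:ℂ) * I * (m:ℂ)) * J (-m) := by
          rw [intervalIntegral.integral_const_mul]
      _ = J (-m) := by rw [hexp1, one_mul]
  constructor
  · rw [hcJ, neg_zero, hJ]
    simp only [Int.cast_zero, mul_zero, zero_mul, Complex.exp_zero, mul_one]
    rw [intervalIntegral.integral_ofReal, hint]
    norm_num
  · intro k hk
    rw [hcJ, ← hJsym]
    have : J k = J (k.natAbs : ℤ) := by
      rcases Int.natAbs_eq k with h | h
      · rw [← h]
      · rw [hJsym, show -k = (k.natAbs : ℤ) by omega]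
    rw [this]
    have h1 : 1 ≤ k.natAbs := Int.natAbs_pos.mpr hk
    have := hpos k.natAbs h1
    convert this using 3
    simp

end Aux

/-- Uniform distribution mod 1 in the sense of Weyl's criterion. -/
def WeylUD (x : ℕ → ℝ) : Prop :=
  ∀ ℓ : ℤ, ℓ ≠ 0 →
    Filter.Tendsto (fun N : ℕ => (1 / (N : ℂ)) * ∑ n ∈ Finset.range N,
      Complex.exp (2 * (Real.pi : ℂ) * Complex.I * (ℓ : ℂ) * (x n : ℂ))) Filter.atTop (nhds 0)

theorem stmt_4 (φ : ℝ → ℝ) (hsmooth : ContDiff ℝ (⊤ : ℕ∞) φ) (hper : Function.Periodic φ 1)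
    (hint : ∫ x in (0:ℝ)..1, φ x = 1)
    (hsym : ∀ x : ℝ, φ x = φ (1 - x))
    (hpos : ∀ k : ℕ, 1 ≤ k →
      0 < (∫ x in (0:ℝ)..1, (φ x : ℂ) *
        Complex.exp (2 * (π : ℂ) * Complex.I * (k : ℂ) * (x : ℂ))).re)
    (x : ℕ → ℝ) :
    WeylUD x ↔
      Tendsto (fun N : ℕ => (1 / (N : ℝ) ^ 2) *
        ∑ m ∈ Finset.range N, ∑ n ∈ Finset.range N, φ (x n - x m))
        atTop (nhds 1) := by
  obtain ⟨hsum, hpt⟩ := phi_expansion hsmooth hper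
  obtain ⟨hc0, hcre⟩ := coeff_props hper hint hsym hpos (hsmooth.continuous)
  set c : ℤ → ℂ := fourierCoeffOn zero_lt_one (fun t => (φ t : ℂ)) with hc
  set e : ℤ → ℝ → ℂ := fun k t => Complex.exp (2 * (π:ℂ) * Complex.I * (k:ℂ) * (t:ℂ)) with he
  set S : ℕ → ℤ → ℂ := fun N k => ∑ n ∈ range N, e k (x n) with hS
  set f : ℕ → ℤ → ℝ := fun N k => (c k).re * (‖S N k‖ / N)^2 with hf
  -- basic facts
  have henorm : ∀ (k : ℤ) (t : ℝ), ‖e k t‖ = 1 := by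
    intro k t
    simp only [he, Complex.norm_exp]
    norm_num
  have hSnorm : ∀ N k, ‖S N k‖ ≤ N := by
    intro N k
    calc ‖S N k‖ ≤ ∑ n ∈ range N, ‖e k (x n)‖ := norm_sum_le _ _
      _ = N := by simp [henorm]
  have hcre0 : ∀ k : ℤ, 0 ≤ (c k).re := by
    intro k
    rcases eq_or_ne k 0 with rfl | hk
    · rw [hc0]; norm_num
    · exact (hcre k hk).le
  have hS0 : ∀ N, S N 0 = (N : ℂ) := by
    intro N
    simp [hS, he]
  -- conjugation identity
  have hconj : ∀ (k : ℤ) (a b : ℝ), e k (a - b) = e k a * (starRingEnd ℂ) (e k b) := by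
    intro k a b
    simp only [he]
    rw [← Complex.exp_conj, ← Complex.exp_add]
    congr 1
    simp only [map_mul, Complex.conj_I, Complex.conj_ofReal, map_intCast, map_ofNat]
    push_cast
    ring
  -- the key HasSum identity
  have hkey : ∀ N : ℕ, HasSum (f N) ((1 / (N : ℝ) ^ 2) *
      ∑ m ∈ range N, ∑ n ∈ range N, φ (x n - x m)) := by
    intro N
    have h2 : HasSum (fun k => ∑ m ∈ range N, ∑ n ∈ range N, c k * e k (x n - x m))
        ((∑ m ∈ range N, ∑ n ∈ range N, φ (x n - x m) : ℝ) : ℂ) := by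
      have := hasSum_sum (s := range N)
        (f := fun m k => ∑ n ∈ range N, c k * e k (x n - x m))
        (a := fun m => ∑ n ∈ range N, ((φ (x n - x m) : ℝ) : ℂ))
        (fun m _ => hasSum_sum (fun n _ => hpt (x n - x m)))
      convert this using 1
      push_cast
      rfl
    have h3 : ∀ k, (∑ m ∈ range N, ∑ n ∈ range N, c k * e k (x n - x m))
        = c k * ((‖S N k‖^2 : ℝ) : ℂ) := by
      intro k
      have : ∀ m n : ℕ, c k * e k (x n - x m)
          = c k * (e k (x n) * (starRingEnd ℂ) (e k (x m))) := by
        intro m n; rw [hconj]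
      simp_rw [this]
      have : ∑ m ∈ range N, ∑ n ∈ range N, c k * (e k (x n) * (starRingEnd ℂ) (e k (x m)))
          = c k * (S N k * (starRingEnd ℂ) (S N k)) := by
        rw [Finset.sum_comm]
        simp_rw [← Finset.mul_sum, ← Finset.sum_mul, ← map_sum]
        rfl
      rw [this, Complex.mul_conj']
      norm_cast
    rw [funext h3] at h2
    -- take real parts
    have h4 : HasSum (fun k => ((c k * ((‖S N k‖^2 : ℝ) : ℂ)).re))
        (∑ m ∈ range N, ∑ n ∈ range N, φ (x n - x m)) := by
      have := Complex.hasSum_re h2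
      simpa using this
    have h5 : (fun k => (c k * ((‖S N k‖^2 : ℝ) : ℂ)).re)
        = fun k => (c k).re * ‖S N k‖^2 := by
      funext k
      simp [Complex.mul_re, ← Complex.ofReal_pow]
    rw [h5] at h4
    have h6 := h4.mul_left (1 / (N:ℝ)^2)
    have h7 : f N = fun i => 1 / (N:ℝ)^2 * ((c i).re * ‖S N i‖ ^ 2) := by
      funext k
      simp only [hf]
      rw [div_pow]
      ring
    rw [h7]
    exact h6
  constructor
  · -- Weyl ⇒ averages converge
    intro hW
    have hEq : (fun N : ℕ => (1 / (N : ℝ) ^ 2) *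
        ∑ m ∈ range N, ∑ n ∈ range N, φ (x n - x m)) = fun N => ∑' k, f N k :=
      funext fun N => ((hkey N).tsum_eq).symm
    rw [hEq]
    have hlim : ∀ k : ℤ, Tendsto (fun N => f N k) atTop (nhds (if k = 0 then (1:ℝ) else 0)) := by
      intro k
      rcases eq_or_ne k 0 with rfl | hk
      · simp only [if_pos rfl]
        apply Tendsto.congr' _ tendsto_const_nhds
        filter_upwards [eventually_ge_atTop 1] with N hN
        have hN0 : (N:ℝ) ≠ 0 := by
          have : (0:ℝ) < N := by exact_mod_cast hN
          exact this.ne'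
        simp [hf, hS0, hc0, div_self hN0]
      · simp only [if_neg hk]
        have hWk := hW k hk
        have h1 : Tendsto (fun N : ℕ => ‖(1 / (N : ℂ)) * S N k‖) atTop (nhds 0) := by
          simpa using hWk.norm
        have h2 : (fun N : ℕ => f N k)
            = fun N : ℕ => (c k).re * ‖(1 / (N : ℂ)) * S N k‖^2 := by
          funext N
          simp only [hf, norm_mul, norm_div, norm_one, Complex.norm_natCast]
          ring
        rw [h2]
        simpa using ((h1.pow 2).const_mul ((c k).re))
    have hbound : ∀ᶠ N in atTop, ∀ k, ‖f N k‖ ≤ ‖c k‖ := by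
      filter_upwards [eventually_ge_atTop 1] with N hN
      intro k
      have hN0 : (0:ℝ) < N := by exact_mod_cast hN
      have h1 : ‖S N k‖ / N ≤ 1 := by
        rw [div_le_one hN0]; exact hSnorm N k
      have h2 : (0:ℝ) ≤ ‖S N k‖ / N := by positivity
      calc ‖f N k‖ = |(c k).re| * (‖S N k‖/N)^2 := by
            rw [hf]; rw [Real.norm_eq_abs, abs_mul, abs_of_nonneg (sq_nonneg (‖S N k‖ / (N:ℝ)))]
        _ ≤ ‖c k‖ * 1 := by
            apply mul_le_mul (Complex.abs_re_le_norm _) (pow_le_one₀ h2 h1)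
              (by positivity) (norm_nonneg _)
        _ = ‖c k‖ := mul_one _
    have hmain := tendsto_tsum_of_dominated_convergence hsum.norm hlim hbound
    rw [tsum_ite_eq] at hmain
    exact hmain
  · -- averages converge ⇒ Weyl
    intro hA ℓ hℓ
    have hA1 : Tendsto (fun N : ℕ => (1 / (N : ℝ) ^ 2) *
        (∑ m ∈ range N, ∑ n ∈ range N, φ (x n - x m)) - 1) atTop (nhds 0) := by
      simpa using hA.sub (tendsto_const_nhds (x := (1:ℝ)))
    have hfnn : ∀ (N : ℕ) (k : ℤ), 0 ≤ f N k := by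
      intro N k
      exact mul_nonneg (hcre0 k) (sq_nonneg _)
    have hfub : ∀ᶠ N : ℕ in atTop, f N ℓ ≤ (1 / (N : ℝ) ^ 2) *
        (∑ m ∈ range N, ∑ n ∈ range N, φ (x n - x m)) - 1 := by
      filter_upwards [eventually_ge_atTop 1] with N hN
      have hN0 : (N:ℝ) ≠ 0 := by
        have : (0:ℝ) < N := by exact_mod_cast hN
        exact this.ne'
      have hle := sum_le_hasSum ({0, ℓ} : Finset ℤ) (fun k _ => hfnn N k) (hkey N)
      rw [Finset.sum_pair (Ne.symm hℓ)] at hle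
      have hfN0 : f N 0 = 1 := by
        simp [hf, hS0, hc0, div_self hN0]
      linarith
    have hfl : Tendsto (fun N => f N ℓ) atTop (nhds 0) :=
      tendsto_of_tendsto_of_tendsto_of_le_of_le' tendsto_const_nhds hA1
        (Eventually.of_forall (fun N => hfnn N ℓ)) hfub
    have hWnorm : Tendsto (fun N : ℕ => ‖(1 / (N:ℂ)) * S N ℓ‖^2) atTop (nhds 0) := by
      have heq2 : (fun N : ℕ => ‖(1 / (N:ℂ)) * S N ℓ‖^2) = fun N : ℕ => f N ℓ / (c ℓ).re := by
        funext N
        simp only [hf, norm_mul, norm_div, norm_one, Complex.norm_natCast]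
        have hcne : (c ℓ).re ≠ 0 := (hcre ℓ hℓ).ne'
        rw [mul_comm ((c ℓ).re), mul_div_assoc, div_self hcne, mul_one]
        ring
      rw [heq2]
      simpa using hfl.div_const ((c ℓ).re)
    have h2 : Tendsto (fun N : ℕ => ‖(1 / (N:ℂ)) * S N ℓ‖) atTop (nhds 0) := by
      have hsq := (Real.continuous_sqrt.tendsto' 0 0 (by simp)).comp hWnorm
      have : (fun N : ℕ => ‖(1 / (N:ℂ)) * S N ℓ‖)
          = fun N : ℕ => Real.sqrt (‖(1 / (N:ℂ)) * S N ℓ‖^2) := by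
        funext N
        rw [Real.sqrt_sq (norm_nonneg _)]
      rw [this]
      exact hsq
    exact tendsto_zero_iff_norm_tendsto_zero.mpr h2
end

section
/- Let (x_n) be a sequence in [0,1) such that for every positive integer s, lim_{N→∞} (1/N) #{1 ≤ m ≠ n ≤ N : ‖x_m - x_n‖ ≤ s/N} = 2s, where ‖·‖ denotes distance to the nearest integer. Then (x_n) is uniformly distributed mod 1. -/
open Real Filter Finset

/-- Distance to the nearest integer. -/
noncomputable def distNearestInt (y : ℝ) : ℝ := |y - round y|

namespace PCaux

lemma dnt_nonneg (y : ℝ) : 0 ≤ distNearestInt y := abs_nonneg _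

lemma dnt_zero : distNearestInt 0 = 0 := by simp [distNearestInt]

lemma dnt_le_abs_sub_int (y : ℝ) (k : ℤ) : distNearestInt y ≤ |y - k| := by
  rcases eq_or_ne k (round y) with rfl | hk
  · exact le_of_eq rfl
  · have h1 : |y - round y| ≤ 1/2 := abs_sub_round y
    have h2 : (1 : ℝ) ≤ |(k : ℝ) - round y| := by
      have : k - round y ≠ 0 := sub_ne_zero.mpr hk
      have := Int.one_le_abs this
      calc (1:ℝ) ≤ |(k - round y : ℤ)| := by exact_mod_cast this
        _ = |(k : ℝ) - round y| := by push_cast [Int.cast_abs]; ring_nf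
    have h3 : |(k:ℝ) - round y| ≤ |y - k| + |y - round y| := by
      have := abs_sub_abs_le_abs_sub ((k:ℝ) - round y) 0
      calc |(k:ℝ) - round y| = |(y - round y) - (y - k)| := by ring_nf
        _ ≤ |y - round y| + |y - k| := abs_sub _ _
        _ = |y - k| + |y - round y| := by ring
    unfold distNearestInt
    linarith

lemma dnt_le_iff {y r : ℝ} : distNearestInt y ≤ r ↔ ∃ k : ℤ, |y - k| ≤ r := by
  constructor
  · exact fun h => ⟨round y, h⟩
  · rintro ⟨k, hk⟩; exact (dnt_le_abs_sub_int y k).trans hk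

lemma dnt_add_one (y : ℝ) : distNearestInt (y + 1) = distNearestInt y := by
  unfold distNearestInt
  have : round (y + 1) = round y + 1 := by exact_mod_cast round_add_intCast y 1
  rw [this]
  push_cast
  ring_nf

end PCaux

namespace PCaux

lemma int_eq_zero_of_abs_lt_one {k : ℤ} (h : |(k:ℝ)| < 1) : k = 0 := by
  have h2 : |k| < 1 := by exact_mod_cast (by rwa [← Int.cast_abs] at h : ((|k|:ℤ):ℝ) < 1)
  rw [abs_lt] at h2
  omega

noncomputable def arcSet (t a : ℝ) : Set ℝ := {u | distNearestInt (u - a) ≤ t/2}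

lemma arcSet_eq (t a : ℝ) :
    arcSet t a = ⋃ k : ℤ, Set.Icc (a + k - t/2) (a + k + t/2) := by
  ext u
  simp only [arcSet, Set.mem_setOf_eq, Set.mem_iUnion, Set.mem_Icc, dnt_le_iff]
  constructor
  · rintro ⟨k, hk⟩
    rw [abs_le] at hk
    exact ⟨k, by constructor <;> linarith [hk.1, hk.2]⟩
  · rintro ⟨k, h1, h2⟩
    exact ⟨k, by rw [abs_le]; constructor <;> linarith⟩

lemma arcSet_meas (t a : ℝ) : MeasurableSet (arcSet t a) := by
  rw [arcSet_eq]
  exact MeasurableSet.iUnion (fun k => measurableSet_Icc)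

lemma mem_arcSet_iff {t a u : ℝ} : u ∈ arcSet t a ↔ ∃ k : ℤ, |u - a - k| ≤ t/2 := by
  simp only [arcSet, Set.mem_setOf_eq, dnt_le_iff]

lemma arcSet_window {t : ℝ} (ht0 : 0 < t) (ht : t < 1/2) (a : ℝ) :
    arcSet t a ∩ Set.Ioc (a - 1/2) (a + 1/2) = Set.Icc (a - t/2) (a + t/2) := by
  ext u
  simp only [Set.mem_inter_iff, Set.mem_Ioc, Set.mem_Icc, mem_arcSet_iff]
  constructor
  · rintro ⟨⟨k, hk⟩, hw1, hw2⟩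
    rw [abs_le] at hk
    have hk0 : k = 0 := by
      apply int_eq_zero_of_abs_lt_one
      rw [abs_lt]
      constructor <;> linarith [hk.1, hk.2]
    subst hk0
    simp only [Int.cast_zero, sub_zero] at hk
    constructor <;> linarith [hk.1, hk.2]
  · rintro ⟨h1, h2⟩
    refine ⟨⟨0, ?_⟩, ?_, ?_⟩
    · simp only [Int.cast_zero, sub_zero, abs_le]; constructor <;> linarith
    · linarith
    · linarith

/-- The two-arc intersection is inside a short interval. -/
lemma arcSet_pair_subset {t : ℝ} (ht0 : 0 < t) (ht : t < 1/2) (a b : ℝ) :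
    arcSet t a ∩ arcSet t b ∩ Set.Ioc (a - 1/2) (a + 1/2) ⊆
      Set.Icc (max a (b + round (a - b)) - t/2) (min a (b + round (a - b)) + t/2) := by
  intro u hu
  obtain ⟨⟨ha, hb⟩, hw⟩ := hu
  have haw : u ∈ Set.Icc (a - t/2) (a + t/2) := by
    rw [← arcSet_window ht0 ht a]; exact ⟨ha, hw⟩
  obtain ⟨h1, h2⟩ := haw
  obtain ⟨k, hk⟩ := mem_arcSet_iff.mp hb
  rw [abs_le] at hk
  set r : ℤ := round (a - b) with hr
  have hrd : |a - b - r| ≤ 1/2 := abs_sub_round (a - b)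
  rw [abs_le] at hrd
  have hcast : |((k - r : ℤ) : ℝ)| < 1 := by
    push_cast
    rw [abs_lt]
    constructor <;> linarith [hk.1, hk.2, hrd.1, hrd.2]
  have hk0 : k = r := by
    have := int_eq_zero_of_abs_lt_one hcast
    omega
  subst hk0
  constructor
  · rw [sub_le_iff_le_add, max_le_iff]
    constructor <;> linarith [hk.1, hk.2]
  · rw [← sub_le_iff_le_add, le_min_iff]
    constructor <;> linarith [hk.1, hk.2]

end PCaux

namespace PCaux
open MeasureTheory intervalIntegral

noncomputable def chi (t a : ℝ) : ℝ → ℝ := (arcSet t a).indicator (fun _ => (1:ℝ))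

lemma chi_nonneg (t a u : ℝ) : 0 ≤ chi t a u := Set.indicator_nonneg (fun _ _ => zero_le_one) u

lemma chi_le_one (t a u : ℝ) : chi t a u ≤ 1 :=
  Set.indicator_le' (fun _ _ => le_refl 1) (fun _ _ => zero_le_one) u

lemma chi_meas (t a : ℝ) : Measurable (chi t a) :=
  measurable_const.indicator (arcSet_meas t a)

lemma chi_periodic (t a : ℝ) : Function.Periodic (chi t a) 1 := by
  intro u
  have h : u + 1 ∈ arcSet t a ↔ u ∈ arcSet t a := by
    simp only [arcSet, Set.mem_setOf_eq, show u + 1 - a = (u - a) + 1 by ring, dnt_add_one]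
  unfold chi
  by_cases hm : u ∈ arcSet t a
  · rw [Set.indicator_of_mem (h.mpr hm), Set.indicator_of_mem hm]
  · rw [Set.indicator_of_notMem (fun hh => hm (h.mp hh)), Set.indicator_of_notMem hm]

lemma shift_window {f : ℝ → ℝ} (hf : Function.Periodic f 1) (a : ℝ) :
    ∫ u in (0:ℝ)..1, f u = ∫ u in (a - 1/2)..(a + 1/2), f u := by
  have h := hf.intervalIntegral_add_eq 0 (a - 1/2)
  rw [zero_add] at h
  rw [h, show a - 1/2 + 1 = a + 1/2 by ring]

lemma chi_mul_integral {t : ℝ} (ht0 : 0 < t) (ht : t < 1/2) (a : ℝ) (f : ℝ → ℝ)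
    (hf : Function.Periodic f 1) (hfi : ∀ x y : ℝ, IntervalIntegrable f volume x y) :
    ∫ u in (0:ℝ)..1, chi t a u * f u = ∫ u in (a - t/2)..(a + t/2), f u := by
  have hper : Function.Periodic (fun u => chi t a u * f u) 1 := (chi_periodic t a).mul hf
  rw [shift_window hper a]
  rw [intervalIntegral.integral_of_le (by linarith)]
  have hpt : ∀ u, chi t a u * f u = (arcSet t a).indicator f u := by
    intro u
    by_cases h : u ∈ arcSet t a <;> simp [chi, h]
  simp only [hpt]
  rw [MeasureTheory.setIntegral_indicator (arcSet_meas t a), Set.inter_comm,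
    arcSet_window ht0 ht a, MeasureTheory.integral_Icc_eq_integral_Ioc,
    ← intervalIntegral.integral_of_le (by linarith : a - t/2 ≤ a + t/2)]

lemma chi_integral {t : ℝ} (ht0 : 0 < t) (ht : t < 1/2) (a : ℝ) :
    ∫ u in (0:ℝ)..1, chi t a u = t := by
  have h := chi_mul_integral ht0 ht a (fun _ => (1:ℝ)) (fun _ => rfl)
    (fun x y => intervalIntegrable_const)
  simp only [mul_one] at h
  rw [h, intervalIntegral.integral_const, smul_eq_mul, mul_one]
  ring

lemma chi_pair {t : ℝ} (ht0 : 0 < t) (ht : t < 1/2) (a b : ℝ) :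
    ∫ u in (0:ℝ)..1, chi t a u * chi t b u ≤ max 0 (t - distNearestInt (a - b)) := by
  have hper : Function.Periodic (fun u => chi t a u * chi t b u) 1 :=
    (chi_periodic t a).mul (chi_periodic t b)
  rw [shift_window hper a]
  rw [intervalIntegral.integral_of_le (by linarith)]
  have hpt : ∀ u, chi t a u * chi t b u =
      (arcSet t a ∩ arcSet t b).indicator (fun _ => (1:ℝ)) u := by
    intro u
    by_cases h1 : u ∈ arcSet t a <;> by_cases h2 : u ∈ arcSet t b <;>
      simp [chi, h1, h2, Set.indicator_of_mem, Set.indicator_of_notMem]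
  simp only [hpt]
  rw [MeasureTheory.setIntegral_indicator ((arcSet_meas t a).inter (arcSet_meas t b))]
  rw [MeasureTheory.setIntegral_const, smul_eq_mul, mul_one]
  set c := b + (round (a - b) : ℝ) with hc
  have hsub : Set.Ioc (a - 1/2) (a + 1/2) ∩ (arcSet t a ∩ arcSet t b) ⊆
      Set.Icc (max a c - t/2) (min a c + t/2) := by
    intro u hu
    exact arcSet_pair_subset ht0 ht a b ⟨hu.2, hu.1⟩
  have hd : distNearestInt (a - b) = |a - c| := by
    unfold distNearestInt
    rw [hc]; ring_nf
  calc (volume (Set.Ioc (a - 1/2) (a + 1/2) ∩ (arcSet t a ∩ arcSet t b))).toReal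
      ≤ (volume (Set.Icc (max a c - t/2) (min a c + t/2))).toReal := by
        apply ENNReal.toReal_mono
        · rw [Real.volume_Icc]; exact ENNReal.ofReal_ne_top
        · exact measure_mono hsub
    _ = max (min a c + t/2 - (max a c - t/2)) 0 := by
        rw [Real.volume_Icc, ENNReal.toReal_ofReal']
    _ = max 0 (t - distNearestInt (a - b)) := by
        rw [hd, max_comm]
        congr 1
        have : max a c - min a c = |a - c| := by
          rcases le_total a c with h | h
          · rw [max_eq_right h, min_eq_left h, abs_of_nonpos (by linarith)]; ring
          · rw [max_eq_left h, min_eq_right h, abs_of_nonneg (by linarith)]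
        linarith [this]

end PCaux

namespace PCaux
open MeasureTheory intervalIntegral

lemma two_pi_l_ne {ℓ : ℤ} (hl : ℓ ≠ 0) : (2*π*(ℓ:ℝ)) ≠ 0 := by
  have : (ℓ:ℝ) ≠ 0 := Int.cast_ne_zero.mpr hl
  positivity

lemma cos_per (ℓ : ℤ) : Function.Periodic (fun u => Real.cos (2*π*ℓ*u)) 1 := by
  intro u
  simp only
  rw [show 2*π*(ℓ:ℝ)*(u+1) = 2*π*ℓ*u + ℓ*(2*π) by ring, Real.cos_add_int_mul_two_pi]

lemma sin_per (ℓ : ℤ) : Function.Periodic (fun u => Real.sin (2*π*ℓ*u)) 1 := by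
  intro u
  simp only
  rw [show 2*π*(ℓ:ℝ)*(u+1) = 2*π*ℓ*u + ℓ*(2*π) by ring, Real.sin_add_int_mul_two_pi]

lemma cos_cont (ℓ : ℤ) : Continuous (fun u : ℝ => Real.cos (2*π*ℓ*u)) :=
  Real.continuous_cos.comp (continuous_const.mul continuous_id)

lemma sin_cont (ℓ : ℤ) : Continuous (fun u : ℝ => Real.sin (2*π*ℓ*u)) :=
  Real.continuous_sin.comp (continuous_const.mul continuous_id)

lemma int_cos_window {ℓ : ℤ} (hl : ℓ ≠ 0) (lo hi : ℝ) :
    ∫ u in lo..hi, Real.cos (2*π*ℓ*u)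
      = (Real.sin (2*π*ℓ*hi) - Real.sin (2*π*ℓ*lo))/(2*π*ℓ) := by
  rw [intervalIntegral.integral_comp_mul_left Real.cos (two_pi_l_ne hl),
    integral_cos, smul_eq_mul]
  field_simp

lemma int_sin_window {ℓ : ℤ} (hl : ℓ ≠ 0) (lo hi : ℝ) :
    ∫ u in lo..hi, Real.sin (2*π*ℓ*u)
      = (Real.cos (2*π*ℓ*lo) - Real.cos (2*π*ℓ*hi))/(2*π*ℓ) := by
  rw [intervalIntegral.integral_comp_mul_left Real.sin (two_pi_l_ne hl),
    integral_sin, smul_eq_mul]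
  field_simp

lemma int_cos_one {ℓ : ℤ} (hl : ℓ ≠ 0) : ∫ u in (0:ℝ)..1, Real.cos (2*π*ℓ*u) = 0 := by
  rw [int_cos_window hl]
  rw [show 2*π*(ℓ:ℝ)*1 = 0 + ℓ*(2*π) by ring, Real.sin_add_int_mul_two_pi]
  simp

lemma int_sin_one {ℓ : ℤ} (hl : ℓ ≠ 0) : ∫ u in (0:ℝ)..1, Real.sin (2*π*ℓ*u) = 0 := by
  rw [int_sin_window hl]
  rw [show 2*π*(ℓ:ℝ)*1 = 0 + ℓ*(2*π) by ring, Real.cos_add_int_mul_two_pi]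
  simp

lemma int_cos_sq {ℓ : ℤ} (hl : ℓ ≠ 0) :
    ∫ u in (0:ℝ)..1, (Real.cos (2*π*ℓ*u))^2 = 1/2 := by
  have h2 : (2*ℓ : ℤ) ≠ 0 := by omega
  have hcong : ∀ u : ℝ, (Real.cos (2*π*ℓ*u))^2 = 1/2 + (Real.cos (2*π*(2*ℓ:ℤ)*u))/2 := by
    intro u
    rw [Real.cos_sq]
    push_cast
    ring_nf
  simp only [hcong]
  rw [intervalIntegral.integral_add intervalIntegrable_const
    (((cos_cont (2*ℓ)).intervalIntegrable 0 1).div_const 2)]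
  simp only [intervalIntegral.integral_div]
  rw [int_cos_one h2]
  simp

lemma int_sin_sq {ℓ : ℤ} (hl : ℓ ≠ 0) :
    ∫ u in (0:ℝ)..1, (Real.sin (2*π*ℓ*u))^2 = 1/2 := by
  have hcong : ∀ u : ℝ, (Real.sin (2*π*ℓ*u))^2 = 1 - (Real.cos (2*π*ℓ*u))^2 := by
    intro u
    rw [Real.sin_sq]
  simp only [hcong]
  rw [intervalIntegral.integral_sub (g := fun u => (Real.cos (2*π*ℓ*u))^2)
    intervalIntegrable_const (((cos_cont ℓ).pow 2).intervalIntegrable 0 1)]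
  rw [int_cos_sq hl]
  norm_num

lemma int_cos_mul_sin {ℓ : ℤ} (hl : ℓ ≠ 0) :
    ∫ u in (0:ℝ)..1, Real.cos (2*π*ℓ*u) * Real.sin (2*π*ℓ*u) = 0 := by
  have h2 : (2*ℓ : ℤ) ≠ 0 := by omega
  have hcong : ∀ u : ℝ, Real.cos (2*π*ℓ*u) * Real.sin (2*π*ℓ*u)
      = (Real.sin (2*π*(2*ℓ:ℤ)*u))/2 := by
    intro u
    rw [show 2*π*((2*ℓ:ℤ):ℝ)*u = 2*(2*π*ℓ*u) by push_cast; ring, Real.sin_two_mul]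
    ring
  simp only [hcong]
  rw [intervalIntegral.integral_div, int_sin_one h2]
  simp

lemma chi_cos {t : ℝ} (ht0 : 0 < t) (ht : t < 1/2) (a : ℝ) {ℓ : ℤ} (hl : ℓ ≠ 0) :
    ∫ u in (0:ℝ)..1, chi t a u * Real.cos (2*π*ℓ*u)
      = (Real.sin (π*ℓ*t)/(π*ℓ)) * Real.cos (2*π*ℓ*a) := by
  rw [chi_mul_integral ht0 ht a _ (cos_per ℓ) (fun x y => (cos_cont ℓ).intervalIntegrable x y)]
  rw [int_cos_window hl]
  rw [Real.sin_sub_sin]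
  rw [show (2*π*(ℓ:ℝ)*(a + t/2) - 2*π*ℓ*(a - t/2))/2 = π*ℓ*t by ring,
    show (2*π*(ℓ:ℝ)*(a + t/2) + 2*π*ℓ*(a - t/2))/2 = 2*π*ℓ*a by ring]
  have hpl : π*(ℓ:ℝ) ≠ 0 := by
    have : (ℓ:ℝ) ≠ 0 := Int.cast_ne_zero.mpr hl
    positivity
  field_simp

lemma chi_sin {t : ℝ} (ht0 : 0 < t) (ht : t < 1/2) (a : ℝ) {ℓ : ℤ} (hl : ℓ ≠ 0) :
    ∫ u in (0:ℝ)..1, chi t a u * Real.sin (2*π*ℓ*u)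
      = (Real.sin (π*ℓ*t)/(π*ℓ)) * Real.sin (2*π*ℓ*a) := by
  rw [chi_mul_integral ht0 ht a _ (sin_per ℓ) (fun x y => (sin_cont ℓ).intervalIntegrable x y)]
  rw [int_sin_window hl]
  rw [Real.cos_sub_cos]
  rw [show (2*π*(ℓ:ℝ)*(a - t/2) + 2*π*ℓ*(a + t/2))/2 = 2*π*ℓ*a by ring,
    show (2*π*(ℓ:ℝ)*(a - t/2) - 2*π*ℓ*(a + t/2))/2 = -(π*ℓ*t) by ring]
  rw [Real.sin_neg]
  have hpl : π*(ℓ:ℝ) ≠ 0 := by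
    have : (ℓ:ℝ) ≠ 0 := Int.cast_ne_zero.mpr hl
    positivity
  field_simp

end PCaux

namespace PCaux
open MeasureTheory intervalIntegral

lemma II_bdd {f : ℝ → ℝ} (hf : Measurable f) (C : ℝ) (hC : ∀ u, |f u| ≤ C) :
    IntervalIntegrable f volume 0 1 := by
  rw [intervalIntegrable_iff]
  have hconst : MeasureTheory.IntegrableOn (fun _ : ℝ => C) (Set.uIoc (0:ℝ) 1) volume := by
    refine MeasureTheory.integrableOn_const ?_
    rw [Set.uIoc_of_le (by norm_num : (0:ℝ) ≤ 1), Real.volume_Ioc]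
    exact ENNReal.ofReal_ne_top
  exact hconst.mono' hf.aestronglyMeasurable
    (Filter.Eventually.of_forall (fun u => by simpa using hC u))

lemma key (x : ℕ → ℝ) (N : ℕ) {t : ℝ} (ht0 : 0 < t) (ht : t < 1/2) {ℓ : ℤ} (hl : ℓ ≠ 0) :
    ((N : ℝ)*t)^2 + 2*(Real.sin (π*ℓ*t)/(π*ℓ))^2 *
      ((∑ m ∈ range N, Real.cos (2*π*ℓ*x m))^2 + (∑ m ∈ range N, Real.sin (2*π*ℓ*x m))^2)
    ≤ ∑ m ∈ range N, ∑ n ∈ range N, max 0 (t - distNearestInt (x m - x n)) := by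
  set κ : ℝ := Real.sin (π*ℓ*t)/(π*ℓ) with hκ
  set P : ℝ := ∑ m ∈ range N, Real.cos (2*π*ℓ*x m) with hP
  set Q : ℝ := ∑ m ∈ range N, Real.sin (2*π*ℓ*x m) with hQ
  set g : ℝ → ℝ := fun u => ∑ m ∈ range N, chi t (x m) u with hg
  -- basic bounds and measurability
  have hgmeas : Measurable g := Finset.measurable_sum _ (fun m _ => chi_meas t (x m))
  have hgnn : ∀ u, 0 ≤ g u := fun u => Finset.sum_nonneg (fun m _ => chi_nonneg t (x m) u)
  have hgleN : ∀ u, g u ≤ N := by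
    intro u
    calc g u ≤ ∑ m ∈ range N, 1 := Finset.sum_le_sum (fun m _ => chi_le_one t (x m) u)
      _ = N := by simp
  have hgbd : ∀ u, |g u| ≤ (N:ℝ) := fun u => by
    rw [abs_of_nonneg (hgnn u)]; exact hgleN u
  -- integrability of pieces
  have ichi : ∀ a : ℝ, IntervalIntegrable (chi t a) volume 0 1 :=
    fun a => II_bdd (chi_meas t a) 1 (fun u => by
      rw [abs_of_nonneg (chi_nonneg t a u)]; exact chi_le_one t a u)
  have ig : IntervalIntegrable g volume 0 1 := II_bdd hgmeas _ hgbd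
  have igg : IntervalIntegrable (fun u => g u ^ 2) volume 0 1 := by
    refine II_bdd (hgmeas.pow measurable_const) ((N:ℝ)^2) (fun u => ?_)
    rw [abs_of_nonneg (sq_nonneg _), sq]
    calc g u * g u ≤ (N:ℝ) * (N:ℝ) :=
      mul_le_mul (hgleN u) (hgleN u) (hgnn u) (Nat.cast_nonneg N)
      _ = (N:ℝ)^2 := by ring
  have igc : IntervalIntegrable (fun u => g u * Real.cos (2*π*ℓ*u)) volume 0 1 := by
    refine II_bdd (hgmeas.mul (cos_cont ℓ).measurable) ((N:ℝ)) (fun u => ?_)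
    rw [abs_mul]
    calc |g u| * |Real.cos (2*π*ℓ*u)| ≤ (N:ℝ) * 1 :=
      mul_le_mul (hgbd u) (Real.abs_cos_le_one _) (abs_nonneg _) (Nat.cast_nonneg N)
      _ = (N:ℝ) := by ring
  have igs : IntervalIntegrable (fun u => g u * Real.sin (2*π*ℓ*u)) volume 0 1 := by
    refine II_bdd (hgmeas.mul (sin_cont ℓ).measurable) ((N:ℝ)) (fun u => ?_)
    rw [abs_mul]
    calc |g u| * |Real.sin (2*π*ℓ*u)| ≤ (N:ℝ) * 1 :=
      mul_le_mul (hgbd u) (Real.abs_sin_le_one _) (abs_nonneg _) (Nat.cast_nonneg N)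
      _ = (N:ℝ) := by ring
  -- integral identities
  have hEg : ∫ u in (0:ℝ)..1, g u = (N:ℝ)*t := by
    rw [hg]
    rw [intervalIntegral.integral_finset_sum (fun m _ => ichi (x m))]
    simp only [chi_integral ht0 ht]
    rw [Finset.sum_const, card_range, nsmul_eq_mul]
  have hEgc : ∫ u in (0:ℝ)..1, g u * Real.cos (2*π*ℓ*u) = κ * P := by
    have hpt : (fun u => g u * Real.cos (2*π*ℓ*u))
        = fun u => ∑ m ∈ range N, chi t (x m) u * Real.cos (2*π*ℓ*u) := by
      funext u
      rw [hg, Finset.sum_mul]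
    rw [hpt]
    rw [intervalIntegral.integral_finset_sum (fun m _ => by
      refine II_bdd ((chi_meas t (x m)).mul (cos_cont ℓ).measurable) 1 (fun u => ?_)
      rw [abs_mul]
      calc |chi t (x m) u| * |Real.cos (2*π*ℓ*u)| ≤ 1 * 1 := by
            apply mul_le_mul _ (Real.abs_cos_le_one _) (abs_nonneg _) zero_le_one
            rw [abs_of_nonneg (chi_nonneg _ _ _)]; exact chi_le_one _ _ _
        _ = 1 := by ring)]
    simp only [chi_cos ht0 ht _ hl]
    rw [hP, Finset.mul_sum]
  have hEgs : ∫ u in (0:ℝ)..1, g u * Real.sin (2*π*ℓ*u) = κ * Q := by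
    have hpt : (fun u => g u * Real.sin (2*π*ℓ*u))
        = fun u => ∑ m ∈ range N, chi t (x m) u * Real.sin (2*π*ℓ*u) := by
      funext u
      rw [hg, Finset.sum_mul]
    rw [hpt]
    rw [intervalIntegral.integral_finset_sum (fun m _ => by
      refine II_bdd ((chi_meas t (x m)).mul (sin_cont ℓ).measurable) 1 (fun u => ?_)
      rw [abs_mul]
      calc |chi t (x m) u| * |Real.sin (2*π*ℓ*u)| ≤ 1 * 1 := by
            apply mul_le_mul _ (Real.abs_sin_le_one _) (abs_nonneg _) zero_le_one
            rw [abs_of_nonneg (chi_nonneg _ _ _)]; exact chi_le_one _ _ _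
        _ = 1 := by ring)]
    simp only [chi_sin ht0 ht _ hl]
    rw [hQ, Finset.mul_sum]
  have hEgg : ∫ u in (0:ℝ)..1, g u ^ 2
      ≤ ∑ m ∈ range N, ∑ n ∈ range N, max 0 (t - distNearestInt (x m - x n)) := by
    have hpt : (fun u => g u ^ 2)
        = fun u => ∑ m ∈ range N, ∑ n ∈ range N, chi t (x m) u * chi t (x n) u := by
      funext u
      rw [hg, sq, Finset.sum_mul_sum]
    rw [hpt]
    have ipair : ∀ a b : ℝ, IntervalIntegrable (fun u => chi t a u * chi t b u) volume 0 1 := by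
      intro a b
      refine II_bdd ((chi_meas t a).mul (chi_meas t b)) 1 (fun u => ?_)
      rw [abs_mul, abs_of_nonneg (chi_nonneg _ _ _), abs_of_nonneg (chi_nonneg _ _ _)]
      calc chi t a u * chi t b u ≤ 1 * 1 :=
        mul_le_mul (chi_le_one _ _ _) (chi_le_one _ _ _) (chi_nonneg _ _ _) zero_le_one
        _ = 1 := by ring
    have iinner : ∀ m : ℕ, IntervalIntegrable
        (fun u => ∑ n ∈ range N, chi t (x m) u * chi t (x n) u) volume 0 1 := by
      intro m
      refine II_bdd (Finset.measurable_sum _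
        (fun n _ => ((chi_meas t (x m)).mul (chi_meas t (x n))))) ((N:ℝ)) (fun u => ?_)
      have h1 : |∑ n ∈ range N, chi t (x m) u * chi t (x n) u|
          ≤ ∑ n ∈ range N, |chi t (x m) u * chi t (x n) u| := Finset.abs_sum_le_sum_abs _ _
      refine h1.trans ?_
      calc ∑ n ∈ range N, |chi t (x m) u * chi t (x n) u| ≤ ∑ n ∈ range N, 1 := by
            apply Finset.sum_le_sum
            intro n _
            rw [abs_mul, abs_of_nonneg (chi_nonneg _ _ _), abs_of_nonneg (chi_nonneg _ _ _)]
            calc chi t (x m) u * chi t (x n) u ≤ 1 * 1 :=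
              mul_le_mul (chi_le_one _ _ _) (chi_le_one _ _ _) (chi_nonneg _ _ _) zero_le_one
              _ = 1 := by ring
        _ = (N:ℝ) := by simp
    rw [intervalIntegral.integral_finset_sum (fun m _ => iinner m)]
    refine Finset.sum_le_sum (fun m _ => ?_)
    rw [intervalIntegral.integral_finset_sum (fun n _ => ipair (x m) (x n))]
    exact Finset.sum_le_sum (fun n _ => chi_pair ht0 ht (x m) (x n))
  -- Bessel
  have hnn : (0:ℝ) ≤ ∫ u in (0:ℝ)..1,
      (g u - (N:ℝ)*t - (2*κ*P)*Real.cos (2*π*ℓ*u) - (2*κ*Q)*Real.sin (2*π*ℓ*u))^2 :=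
    intervalIntegral.integral_nonneg (by norm_num) (fun u _ => sq_nonneg _)
  have hexp : ∀ u : ℝ,
      (g u - (N:ℝ)*t - (2*κ*P)*Real.cos (2*π*ℓ*u) - (2*κ*Q)*Real.sin (2*π*ℓ*u))^2
      = g u ^ 2 + ((-(2*((N:ℝ)*t)))*g u + ((-(2*(2*κ*P)))*(g u * Real.cos (2*π*ℓ*u))
        + ((-(2*(2*κ*Q)))*(g u * Real.sin (2*π*ℓ*u))
        + ((2*κ*P)^2*(Real.cos (2*π*ℓ*u))^2 + ((2*κ*Q)^2*(Real.sin (2*π*ℓ*u))^2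
        + ((2*(2*κ*P)*(2*κ*Q))*(Real.cos (2*π*ℓ*u)*Real.sin (2*π*ℓ*u))
        + ((2*((N:ℝ)*t)*(2*κ*P))*Real.cos (2*π*ℓ*u)
        + ((2*((N:ℝ)*t)*(2*κ*Q))*Real.sin (2*π*ℓ*u) + ((N:ℝ)*t)^2)))))))) := by
    intro u
    ring
  simp only [hexp] at hnn
  have i2 : IntervalIntegrable (fun u => (-(2*((N:ℝ)*t)))*g u) volume 0 1 := ig.const_mul _
  have i3 : IntervalIntegrable (fun u => (-(2*(2*κ*P)))*(g u * Real.cos (2*π*ℓ*u))) volume 0 1 :=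
    igc.const_mul _
  have i4 : IntervalIntegrable (fun u => (-(2*(2*κ*Q)))*(g u * Real.sin (2*π*ℓ*u))) volume 0 1 :=
    igs.const_mul _
  have i5 : IntervalIntegrable (fun u => (2*κ*P)^2*(Real.cos (2*π*ℓ*u))^2) volume 0 1 :=
    (((cos_cont ℓ).pow 2).intervalIntegrable 0 1).const_mul _
  have i6 : IntervalIntegrable (fun u => (2*κ*Q)^2*(Real.sin (2*π*ℓ*u))^2) volume 0 1 :=
    (((sin_cont ℓ).pow 2).intervalIntegrable 0 1).const_mul _
  have i7 : IntervalIntegrable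
      (fun u => (2*(2*κ*P)*(2*κ*Q))*(Real.cos (2*π*ℓ*u)*Real.sin (2*π*ℓ*u))) volume 0 1 :=
    (((cos_cont ℓ).mul (sin_cont ℓ)).intervalIntegrable 0 1).const_mul _
  have i8 : IntervalIntegrable (fun u => (2*((N:ℝ)*t)*(2*κ*P))*Real.cos (2*π*ℓ*u)) volume 0 1 :=
    ((cos_cont ℓ).intervalIntegrable 0 1).const_mul _
  have i9 : IntervalIntegrable (fun u => (2*((N:ℝ)*t)*(2*κ*Q))*Real.sin (2*π*ℓ*u)) volume 0 1 :=
    ((sin_cont ℓ).intervalIntegrable 0 1).const_mul _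
  have i10 : IntervalIntegrable (fun _ : ℝ => ((N:ℝ)*t)^2) volume 0 1 := intervalIntegrable_const
  rw [intervalIntegral.integral_add igg (i2.add (i3.add (i4.add (i5.add (i6.add (i7.add
      (i8.add (i9.add i10)))))))),
    intervalIntegral.integral_add i2 (i3.add (i4.add (i5.add (i6.add (i7.add
      (i8.add (i9.add i10))))))),
    intervalIntegral.integral_add i3 (i4.add (i5.add (i6.add (i7.add (i8.add (i9.add i10)))))),
    intervalIntegral.integral_add i4 (i5.add (i6.add (i7.add (i8.add (i9.add i10))))),
    intervalIntegral.integral_add i5 (i6.add (i7.add (i8.add (i9.add i10)))),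
    intervalIntegral.integral_add i6 (i7.add (i8.add (i9.add i10))),
    intervalIntegral.integral_add i7 (i8.add (i9.add i10)),
    intervalIntegral.integral_add i8 (i9.add i10),
    intervalIntegral.integral_add i9 i10] at hnn
  simp only [intervalIntegral.integral_const_mul] at hnn
  rw [hEg, hEgc, hEgs, int_cos_sq hl, int_sin_sq hl, int_cos_mul_sin hl, int_cos_one hl,
    int_sin_one hl, intervalIntegral.integral_const] at hnn
  simp only [smul_eq_mul] at hnn
  nlinarith [hnn, hEgg]

lemma ptwise_count {d : ℝ} (hd : 0 ≤ d) (s N : ℕ) (hs : 0 < s) (hN : 0 < N) :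
    max 0 ((s:ℝ)/N - d)
      ≤ (1/(N:ℝ)) * (((Finset.Icc 1 s).filter (fun j : ℕ => d ≤ (j:ℝ)/N)).card : ℝ) := by
  have hNpos : (0:ℝ) < N := Nat.cast_pos.mpr hN
  rcases le_or_gt d ((s:ℝ)/N) with hdt | hdt
  · have hdN_le : d * N ≤ s := (le_div_iff₀ hNpos).mp hdt
    set lo : ℕ := max ⌈d*N⌉₊ 1 with hlo
    have hsub : Finset.Icc lo s ⊆ (Finset.Icc 1 s).filter (fun j : ℕ => d ≤ (j:ℝ)/N) := by
      intro j hj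
      rw [Finset.mem_Icc] at hj
      rw [Finset.mem_filter, Finset.mem_Icc]
      refine ⟨⟨le_trans (le_max_right _ 1) hj.1, hj.2⟩, ?_⟩
      rw [le_div_iff₀ hNpos]
      have h1 : ⌈d*N⌉₊ ≤ j := le_trans (le_max_left _ _) hj.1
      calc d * N ≤ (⌈d*N⌉₊:ℝ) := Nat.le_ceil _
        _ ≤ j := Nat.cast_le.mpr h1
    have hlos : lo ≤ s := by
      rw [hlo, max_le_iff]
      exact ⟨Nat.ceil_le.mpr hdN_le, hs⟩
    have hloR : (lo:ℝ) ≤ d*N + 1 := by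
      have hdN0 : 0 ≤ d*N := by positivity
      have h1 : (⌈d*N⌉₊:ℝ) < d*N + 1 := Nat.ceil_lt_add_one hdN0
      have h2 : ((max ⌈d*N⌉₊ 1 : ℕ):ℝ) = max ((⌈d*N⌉₊:ℕ):ℝ) ((1:ℕ):ℝ) := by
        exact_mod_cast Nat.cast_max ..
      rw [hlo, h2, max_le_iff]
      constructor
      · linarith
      · simp only [Nat.cast_one]; linarith
    have hcard : (s:ℝ) - d*N ≤ ((Finset.Icc lo s).card : ℝ) := by
      rw [Nat.card_Icc]
      have hle : lo ≤ s + 1 := le_trans hlos (Nat.le_succ s)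
      rw [Nat.cast_sub hle]
      push_cast
      linarith
    have hmono : ((Finset.Icc lo s).card : ℝ)
        ≤ (((Finset.Icc 1 s).filter (fun j : ℕ => d ≤ (j:ℝ)/N)).card : ℝ) :=
      Nat.cast_le.mpr (Finset.card_le_card hsub)
    rw [max_eq_right (by linarith)]
    have h3 : (s:ℝ)/N - d = ((s:ℝ) - d*N) * (1/N) := by
      field_simp
      try ring
    rw [h3, mul_comm ((1:ℝ)/(N:ℝ)) _]
    apply mul_le_mul_of_nonneg_right (hcard.trans hmono) (by positivity)
  · rw [max_eq_left (by linarith)]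
    positivity

lemma count_bound (x : ℕ → ℝ) (s N : ℕ) (hs : 0 < s) (hN : 0 < N) :
    ∑ m ∈ range N, ∑ n ∈ range N, max 0 ((s:ℝ)/N - distNearestInt (x m - x n))
      ≤ (s:ℝ) + ∑ j ∈ Finset.Icc 1 s, (1/(N:ℝ)) *
          (((range N ×ˢ range N).filter
            (fun p => p.1 ≠ p.2 ∧ distNearestInt (x p.1 - x p.2) ≤ (j:ℝ)/N)).card : ℝ) := by
  have hNpos : (0:ℝ) < N := Nat.cast_pos.mpr hN
  have step1 : ∑ m ∈ range N, ∑ n ∈ range N, max 0 ((s:ℝ)/N - distNearestInt (x m - x n))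
      ≤ ∑ m ∈ range N, ∑ n ∈ range N, (1/(N:ℝ)) *
          (((Finset.Icc 1 s).filter
            (fun j : ℕ => distNearestInt (x m - x n) ≤ (j:ℝ)/N)).card : ℝ) :=
    Finset.sum_le_sum (fun m _ => Finset.sum_le_sum (fun n _ =>
      ptwise_count (dnt_nonneg _) s N hs hN))
  refine step1.trans ?_
  have step2 : ∀ m n : ℕ, (((Finset.Icc 1 s).filter
        (fun j : ℕ => distNearestInt (x m - x n) ≤ (j:ℝ)/N)).card : ℝ)
      = ∑ j ∈ Finset.Icc 1 s,
          (if distNearestInt (x m - x n) ≤ (j:ℝ)/N then (1:ℝ) else 0) :=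
    fun m n => (Finset.sum_boole _ _).symm
  have step3 : ∑ m ∈ range N, ∑ n ∈ range N, (1/(N:ℝ)) *
        (((Finset.Icc 1 s).filter
          (fun j : ℕ => distNearestInt (x m - x n) ≤ (j:ℝ)/N)).card : ℝ)
      = (1/(N:ℝ)) * ∑ j ∈ Finset.Icc 1 s, ∑ m ∈ range N, ∑ n ∈ range N,
          (if distNearestInt (x m - x n) ≤ (j:ℝ)/N then (1:ℝ) else 0) := by
    simp only [step2, ← Finset.mul_sum]
    congr 1
    have swap1 : ∀ m : ℕ, (∑ n ∈ range N, ∑ j ∈ Finset.Icc 1 s,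
          (if distNearestInt (x m - x n) ≤ (j:ℝ)/N then (1:ℝ) else 0))
        = ∑ j ∈ Finset.Icc 1 s, ∑ n ∈ range N,
          (if distNearestInt (x m - x n) ≤ (j:ℝ)/N then (1:ℝ) else 0) :=
      fun m => Finset.sum_comm
    simp only [swap1]
    exact Finset.sum_comm
  rw [step3]
  have step4 : ∀ j : ℕ, ∑ m ∈ range N, ∑ n ∈ range N,
        (if distNearestInt (x m - x n) ≤ (j:ℝ)/N then (1:ℝ) else 0)
      ≤ (N:ℝ) + (((range N ×ˢ range N).filter
          (fun p => p.1 ≠ p.2 ∧ distNearestInt (x p.1 - x p.2) ≤ (j:ℝ)/N)).card : ℝ) := by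
    intro j
    have h1 : ∑ m ∈ range N, ∑ n ∈ range N,
          (if distNearestInt (x m - x n) ≤ (j:ℝ)/N then (1:ℝ) else 0)
        = (((range N ×ˢ range N).filter
            (fun p => distNearestInt (x p.1 - x p.2) ≤ (j:ℝ)/N)).card : ℝ) := by
      rw [← Finset.sum_product']
      exact Finset.sum_boole _ _
    rw [h1]
    have hsub : (range N ×ˢ range N).filter
          (fun p => distNearestInt (x p.1 - x p.2) ≤ (j:ℝ)/N)
        ⊆ ((range N ×ˢ range N).filter (fun p => p.1 = p.2))
          ∪ ((range N ×ˢ range N).filter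
            (fun p => p.1 ≠ p.2 ∧ distNearestInt (x p.1 - x p.2) ≤ (j:ℝ)/N)) := by
      intro p hp
      rw [Finset.mem_filter] at hp
      rw [Finset.mem_union, Finset.mem_filter, Finset.mem_filter]
      by_cases hd : p.1 = p.2
      · exact Or.inl ⟨hp.1, hd⟩
      · exact Or.inr ⟨hp.1, hd, hp.2⟩
    have hdiag : ((range N ×ˢ range N).filter (fun p => p.1 = p.2)).card ≤ (range N).card := by
      apply Finset.card_le_card_of_injOn (fun p => p.1)
      · intro p hp
        rw [Finset.mem_coe, Finset.mem_filter, Finset.mem_product] at hp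
        exact hp.1.1
      · intro p hp q hq hpq
        rw [Finset.mem_coe, Finset.mem_filter] at hp hq
        exact Prod.ext hpq (by rw [← hp.2, ← hq.2]; exact hpq)
    have := Finset.card_le_card hsub
    have h2 := le_trans this (Finset.card_union_le _ _)
    calc (((range N ×ˢ range N).filter
            (fun p => distNearestInt (x p.1 - x p.2) ≤ (j:ℝ)/N)).card : ℝ)
        ≤ (((range N ×ˢ range N).filter (fun p => p.1 = p.2)).card : ℝ)
          + (((range N ×ˢ range N).filter
            (fun p => p.1 ≠ p.2 ∧ distNearestInt (x p.1 - x p.2) ≤ (j:ℝ)/N)).card : ℝ) := by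
          exact_mod_cast h2
      _ ≤ (N:ℝ) + _ := by
          apply add_le_add_left
          have : ((range N ×ˢ range N).filter (fun p => p.1 = p.2)).card ≤ N := by
            simpa using hdiag
          exact_mod_cast this
  calc (1/(N:ℝ)) * ∑ j ∈ Finset.Icc 1 s, ∑ m ∈ range N, ∑ n ∈ range N,
        (if distNearestInt (x m - x n) ≤ (j:ℝ)/N then (1:ℝ) else 0)
      ≤ (1/(N:ℝ)) * ∑ j ∈ Finset.Icc 1 s, ((N:ℝ) + (((range N ×ˢ range N).filter
          (fun p => p.1 ≠ p.2 ∧ distNearestInt (x p.1 - x p.2) ≤ (j:ℝ)/N)).card : ℝ)) := by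
        apply mul_le_mul_of_nonneg_left (Finset.sum_le_sum (fun j _ => step4 j)) (by positivity)
    _ = (s:ℝ) + ∑ j ∈ Finset.Icc 1 s, (1/(N:ℝ)) * (((range N ×ˢ range N).filter
          (fun p => p.1 ≠ p.2 ∧ distNearestInt (x p.1 - x p.2) ≤ (j:ℝ)/N)).card : ℝ) := by
        rw [Finset.sum_add_distrib, Finset.sum_const, Nat.card_Icc, Nat.add_sub_cancel,
          nsmul_eq_mul, mul_add, Finset.mul_sum]
        congr 1
        field_simp

end PCaux

namespace PCaux

lemma exp_term (ℓ : ℤ) (r : ℝ) :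
    Complex.exp (2 * (π:ℂ) * Complex.I * (ℓ:ℂ) * (r:ℂ))
      = ((Real.cos (2*π*ℓ*r) : ℝ) : ℂ) + ((Real.sin (2*π*ℓ*r) : ℝ) : ℂ) * Complex.I := by
  rw [show 2 * (π:ℂ) * Complex.I * (ℓ:ℂ) * (r:ℂ) = ((2*π*ℓ*r : ℝ) : ℂ) * Complex.I by
    push_cast; ring]
  rw [Complex.exp_mul_I, ← Complex.ofReal_cos, ← Complex.ofReal_sin]

lemma normsq_sum (x : ℕ → ℝ) (N : ℕ) (ℓ : ℤ) :
    ‖∑ n ∈ range N, Complex.exp (2 * (π:ℂ) * Complex.I * (ℓ:ℂ) * (x n : ℂ))‖^2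
      = (∑ n ∈ range N, Real.cos (2*π*ℓ*x n))^2 + (∑ n ∈ range N, Real.sin (2*π*ℓ*x n))^2 := by
  have h1 : ∑ n ∈ range N, Complex.exp (2 * (π:ℂ) * Complex.I * (ℓ:ℂ) * (x n : ℂ))
      = ((∑ n ∈ range N, Real.cos (2*π*ℓ*x n) : ℝ) : ℂ)
        + ((∑ n ∈ range N, Real.sin (2*π*ℓ*x n) : ℝ) : ℂ) * Complex.I := by
    simp only [exp_term]
    rw [Finset.sum_add_distrib, ← Finset.sum_mul]
    push_cast
    ring
  rw [h1, Complex.sq_norm, Complex.normSq_apply]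
  simp only [Complex.add_re, Complex.add_im, Complex.ofReal_re, Complex.ofReal_im,
    Complex.mul_re, Complex.mul_im, Complex.I_re, Complex.I_im]
  ring

lemma sum_two_j (s : ℕ) : ∑ j ∈ Finset.Icc 1 s, (2*(j:ℝ)) = (s:ℝ)*((s:ℝ)+1) := by
  induction s with
  | zero => simp
  | succ n ih =>
    rw [Finset.sum_Icc_succ_top (by omega : 1 ≤ n + 1), ih]
    push_cast
    ring

lemma tendsto_sin_div : Tendsto (fun y : ℝ => Real.sin y / y)
    (nhdsWithin 0 {(0:ℝ)}ᶜ) (nhds 1) := by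
  have h := Real.hasDerivAt_sin 0
  rw [hasDerivAt_iff_tendsto_slope] at h
  rw [Real.cos_zero] at h
  apply Tendsto.congr _ h
  intro y
  rw [slope_def_field]
  simp

end PCaux

open PCaux in
theorem stmt_11 (x : ℕ → ℝ) (hx : ∀ n, x n ∈ Set.Ico (0:ℝ) 1)
    (hpc : ∀ s : ℕ, 0 < s →
      Tendsto (fun N : ℕ => (1 / (N : ℝ)) *
        ((Finset.range N ×ˢ Finset.range N).filter
          (fun p => p.1 ≠ p.2 ∧ distNearestInt (x p.1 - x p.2) ≤ (s : ℝ) / N)).card)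
        atTop (nhds (2 * s))) :
    WeylUD x := by
  intro ℓ hl
  rw [NormedAddCommGroup.tendsto_nhds_zero]
  intro ε hε
  obtain ⟨s0, hs0⟩ := exists_nat_one_div_lt (by positivity : (0:ℝ) < ε^2/2)
  set s : ℕ := s0 + 1 with hsdef
  have hs : 0 < s := Nat.succ_pos s0
  have hsR : (0:ℝ) < s := by exact_mod_cast hs
  have hsmall : 1/(s:ℝ) < ε^2/2 := by
    have : ((s:ℝ)) = (s0:ℝ) + 1 := by push_cast [hsdef]; ring
    rw [this]
    exact hs0
  have hl0 : (ℓ:ℝ) ≠ 0 := Int.cast_ne_zero.mpr hl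
  have hπl : π*(ℓ:ℝ) ≠ 0 := mul_ne_zero Real.pi_ne_zero hl0
  -- the pair-correlation sums
  have hu : Tendsto (fun N : ℕ => ∑ j ∈ Finset.Icc 1 s, (1/(N:ℝ)) *
      (((range N ×ˢ range N).filter
        (fun p => p.1 ≠ p.2 ∧ distNearestInt (x p.1 - x p.2) ≤ (j:ℝ)/N)).card : ℝ)) atTop
      (nhds ((s:ℝ)*((s:ℝ)+1))) := by
    rw [← sum_two_j s]
    apply tendsto_finset_sum _ (fun j hj => ?_)
    have hj1 : 0 < j := (Finset.mem_Icc.mp hj).1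
    have h := hpc j hj1
    simpa using h
  -- the sinc factor
  set v : ℕ → ℝ := fun N => (N:ℝ) * (Real.sin (π*ℓ*((s:ℝ)/N))/(π*ℓ)) with hv
  have hvlim : Tendsto v atTop (nhds (s:ℝ)) := by
    have hy : Tendsto (fun N : ℕ => π*(ℓ:ℝ)*((s:ℝ)/N)) atTop (nhds 0) := by
      have h := tendsto_const_div_atTop_nhds_zero_nat (π*(ℓ:ℝ)*(s:ℝ))
      exact h.congr (fun N => by ring)
    have hyne : ∀ᶠ N : ℕ in atTop, π*(ℓ:ℝ)*((s:ℝ)/N) ∈ ({(0:ℝ)}ᶜ : Set ℝ) := by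
      filter_upwards [eventually_ge_atTop 1] with N hN
      have hN0 : (0:ℝ) < N := by exact_mod_cast hN
      simp only [Set.mem_compl_iff, Set.mem_singleton_iff]
      exact mul_ne_zero hπl (by positivity)
    have hcomp : Tendsto (fun N : ℕ =>
        Real.sin (π*ℓ*((s:ℝ)/N)) / (π*ℓ*((s:ℝ)/N))) atTop (nhds 1) :=
      tendsto_sin_div.comp (tendsto_nhdsWithin_iff.mpr ⟨hy, hyne⟩)
    have heq : ∀ᶠ N : ℕ in atTop,
        (Real.sin (π*ℓ*((s:ℝ)/N)) / (π*ℓ*((s:ℝ)/N))) * s = v N := by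
      filter_upwards [eventually_ge_atTop 1] with N hN
      have hN0 : (0:ℝ) < N := by exact_mod_cast hN
      rw [hv]
      have hsN : (s:ℝ)/N ≠ 0 := by positivity
      field_simp
    have h2 := hcomp.mul_const (s:ℝ)
    rw [one_mul] at h2
    exact Tendsto.congr' heq h2
  -- the quotient
  set A : ℕ → ℝ := fun N => ((s:ℝ) + (∑ j ∈ Finset.Icc 1 s, (1/(N:ℝ)) *
      (((range N ×ˢ range N).filter
        (fun p => p.1 ≠ p.2 ∧ distNearestInt (x p.1 - x p.2) ≤ (j:ℝ)/N)).card : ℝ))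
      - (s:ℝ)^2) / (2 * (v N)^2) with hA
  have hAlim : Tendsto A atTop (nhds (1/(s:ℝ))) := by
    have hnum : Tendsto (fun N : ℕ => (s:ℝ) + (∑ j ∈ Finset.Icc 1 s, (1/(N:ℝ)) *
        (((range N ×ˢ range N).filter
          (fun p => p.1 ≠ p.2 ∧ distNearestInt (x p.1 - x p.2) ≤ (j:ℝ)/N)).card : ℝ))
        - (s:ℝ)^2) atTop (nhds ((s:ℝ) + (s:ℝ)*((s:ℝ)+1) - (s:ℝ)^2)) :=
      (tendsto_const_nhds.add hu).sub tendsto_const_nhds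
    have hden : Tendsto (fun N : ℕ => 2 * (v N)^2) atTop (nhds (2*(s:ℝ)^2)) :=
      (hvlim.pow 2).const_mul 2
    have h3 := hnum.div hden (by positivity)
    have hval : ((s:ℝ) + (s:ℝ)*((s:ℝ)+1) - (s:ℝ)^2) / (2*(s:ℝ)^2) = 1/(s:ℝ) := by
      field_simp
      ring
    rw [← hval]
    exact h3
  have hevA : ∀ᶠ N : ℕ in atTop, A N < ε^2 :=
    hAlim.eventually_lt_const (by linarith [sq_nonneg ε])
  -- eventual bound on the Weyl sum
  have hbound : ∀ᶠ N : ℕ in atTop,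
      ‖(1/(N:ℂ)) * ∑ n ∈ range N, Complex.exp (2 * (π:ℂ) * Complex.I * (ℓ:ℂ) * (x n : ℂ))‖^2
        ≤ A N := by
    filter_upwards [eventually_ge_atTop (2*s + s*(Int.natAbs ℓ)*4 + 1)] with N hN
    have hN1 : 1 ≤ N := by omega
    have hNpos : 0 < N := hN1
    have hNR : (0:ℝ) < N := by exact_mod_cast hNpos
    have ht0 : 0 < (s:ℝ)/N := by positivity
    have hNgt : (2*s : ℕ) < N := by omega
    have hNgtR : 2*(s:ℝ) < N := by exact_mod_cast hNgt
    have ht : (s:ℝ)/N < 1/2 := by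
      rw [div_lt_iff₀ hNR]
      linarith
    -- sin ≠ 0
    have hLs : (s:ℝ) * (Int.natAbs ℓ : ℝ) < N := by
      have hgen : ∀ a : ℕ, N ≥ 2*s + a*4 + 1 → a < N := by omega
      have : (s * Int.natAbs ℓ : ℕ) < N := hgen _ (by omega)
      exact_mod_cast this
    have habs : |(ℓ:ℝ)| = (Int.natAbs ℓ : ℝ) := by
      rw [Nat.cast_natAbs]
      push_cast
      rfl
    set y : ℝ := π*(ℓ:ℝ)*((s:ℝ)/N) with hy
    have hyne : y ≠ 0 := mul_ne_zero hπl (by positivity)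
    have hybound : |y| < π := by
      rw [hy, abs_mul, abs_mul, abs_of_pos Real.pi_pos, abs_of_pos ht0, habs]
      calc π * (Int.natAbs ℓ : ℝ) * ((s:ℝ)/N) = π * ((s:ℝ) * (Int.natAbs ℓ : ℝ) / N) := by
            ring
        _ < π * 1 := by
            apply mul_lt_mul_of_pos_left _ Real.pi_pos
            rw [div_lt_one hNR]
            exact hLs
        _ = π := mul_one π
    have hsiny : Real.sin y ≠ 0 := by
      intro hzero
      rw [abs_lt] at hybound
      exact hyne ((Real.sin_eq_zero_iff_of_lt_of_lt hybound.1 hybound.2).mp hzero)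
    have hvne : v N ≠ 0 := by
      rw [hv]
      exact mul_ne_zero (by positivity) (div_ne_zero hsiny hπl)
    have hv2pos : 0 < (v N)^2 := lt_of_le_of_ne (sq_nonneg _) (Ne.symm (pow_ne_zero 2 hvne))
    -- apply key + count_bound
    have hkey := key x N ht0 ht hl
    have hcb := count_bound x s N hs hNpos
    have hNt : ((N:ℝ))*((s:ℝ)/N) = (s:ℝ) := by field_simp
    rw [hNt] at hkey
    have hmain : 2*(Real.sin (π*ℓ*((s:ℝ)/N))/(π*ℓ))^2 *
        ((∑ m ∈ range N, Real.cos (2*π*ℓ*x m))^2 + (∑ m ∈ range N, Real.sin (2*π*ℓ*x m))^2)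
        ≤ (s:ℝ) + (∑ j ∈ Finset.Icc 1 s, (1/(N:ℝ)) *
          (((range N ×ˢ range N).filter
            (fun p => p.1 ≠ p.2 ∧ distNearestInt (x p.1 - x p.2) ≤ (j:ℝ)/N)).card : ℝ))
          - (s:ℝ)^2 := by
      have := hkey.trans hcb
      linarith
    -- rewrite the norm
    have hnorm : ‖(1/(N:ℂ)) * ∑ n ∈ range N,
          Complex.exp (2 * (π:ℂ) * Complex.I * (ℓ:ℂ) * (x n : ℂ))‖^2
        = ((∑ m ∈ range N, Real.cos (2*π*ℓ*x m))^2
            + (∑ m ∈ range N, Real.sin (2*π*ℓ*x m))^2) / (N:ℝ)^2 := by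
      rw [norm_mul, mul_pow, normsq_sum x N ℓ]
      rw [norm_div, norm_one, Complex.norm_natCast]
      field_simp
    rw [hnorm, hA]
    rw [div_le_div_iff₀ (by positivity) (by positivity)]
    have hv2 : (v N)^2 = (N:ℝ)^2 * (Real.sin (π*ℓ*((s:ℝ)/N))/(π*ℓ))^2 := by
      rw [hv]; ring
    rw [hv2]
    nlinarith [mul_le_mul_of_nonneg_left hmain (sq_nonneg (N:ℝ))]
  filter_upwards [hbound, hevA] with N h1 h2
  have h3 : ‖(1/(N:ℂ)) * ∑ n ∈ range N,
      Complex.exp (2 * (π:ℂ) * Complex.I * (ℓ:ℂ) * (x n : ℂ))‖^2 < ε^2 := lt_of_le_of_lt h1 h2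
  nlinarith [norm_nonneg ((1/(N:ℂ)) * ∑ n ∈ range N,
      Complex.exp (2 * (π:ℂ) * Complex.I * (ℓ:ℂ) * (x n : ℂ))), hε]
end

section
/- Let (x_n) be a sequence in ℝ/ℤ and suppose there exists a sequence of positive reals t_N → 0 with lim_{N→∞} (1/N²) Σ_{m,n=1}^N (1/√(t_N)) exp(-(x_m - x_n)²/t_N) = √π, where differences x_m - x_n are taken as the representative in [-1/2, 1/2]. Then (x_n) is uniformly distributed mod 1. -/
open Real Filter Finset

/-- Signed distance on the circle: the representative of y mod 1 in [-1/2, 1/2]. -/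
noncomputable def signedCircleDist (y : ℝ) : ℝ := y - round y

-- basic summability of exp(-c n^2) over ℤ
lemma sumE {c : ℝ} (hc : 0 < c) : Summable (fun n : ℤ ↦ Real.exp (-c * (n : ℝ) ^ 2)) := by
  have h := summable_pow_mul_jacobiTheta₂_term_bound 0 (T := c / π) (div_pos hc Real.pi_pos) 0
  have h' : Summable (fun n : ℤ ↦
      Real.exp (-π * (c / π * (n : ℝ) ^ 2 - 2 * 0 * |(n : ℝ)|))) := by
    simpa [Int.cast_abs] using h
  refine h'.congr fun n ↦ ?_
  congr 1
  field_simp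
  ring

-- summability of the shifted Gaussian over ℤ
lemma sumG {t : ℝ} (ht : 0 < t) (y : ℝ) :
    Summable (fun k : ℤ ↦ Real.exp (-(y + (k : ℝ)) ^ 2 / t)) := by
  have h := summable_pow_mul_jacobiTheta₂_term_bound (|y| / (π * t))
    (T := 1 / (π * t)) (by positivity) 0
  have h' : Summable (fun n : ℤ ↦
      Real.exp (-π * (1 / (π * t) * (n : ℝ) ^ 2 - 2 * (|y| / (π * t)) * |(n : ℝ)|))) := by
    simpa [Int.cast_abs] using h
  refine Summable.of_nonneg_of_le (fun k ↦ (Real.exp_pos _).le) (fun k ↦ ?_) h'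
  rw [Real.exp_le_exp]
  have hexp : -π * (1 / (π * t) * (k : ℝ) ^ 2 - 2 * (|y| / (π * t)) * |(k : ℝ)|) =
      (-(k : ℝ) ^ 2 + 2 * |y| * |(k : ℝ)|) / t := by
    field_simp
    ring
  rw [hexp, div_le_div_iff_of_pos_right ht]
  nlinarith [neg_abs_le (y * (k : ℝ)), abs_mul y (k : ℝ), sq_nonneg y]

-- Fourier side summability
lemma sumF {t : ℝ} (ht : 0 < t) (y : ℝ) :
    Summable (fun n : ℤ ↦ Complex.exp (-(π : ℂ) ^ 2 * t * n ^ 2 + 2 * π * Complex.I * n * y)) := by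
  have him : 0 < (((π * t : ℝ) : ℂ) * Complex.I).im := by
    simpa using mul_pos Real.pi_pos ht
  have h := (summable_jacobiTheta₂_term_iff (y : ℂ) (((π * t : ℝ) : ℂ) * Complex.I)).mpr him
  refine h.congr fun n ↦ ?_
  rw [jacobiTheta₂_term]
  congr 1
  push_cast
  ring_nf
  rw [Complex.I_sq]
  ring

-- Poisson summation
lemma poisson {t : ℝ} (ht : 0 < t) (y : ℝ) :
    ((∑' k : ℤ, Real.exp (-(y + (k : ℝ)) ^ 2 / t) : ℝ) : ℂ) =
      (Real.sqrt (π * t) : ℂ) *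
        ∑' n : ℤ, Complex.exp (-(π : ℂ) ^ 2 * t * n ^ 2 + 2 * π * Complex.I * n * y) := by
  have hπt : (0 : ℝ) < π * t := mul_pos Real.pi_pos ht
  have ha : (0 : ℝ) < (((π * t : ℝ) : ℂ)).re := by simpa using hπt
  have key := Complex.tsum_exp_neg_quadratic ha (Complex.I * y)
  have hsq : (((π * t : ℝ) : ℂ)) ^ ((1 : ℂ) / 2) = (Real.sqrt (π * t) : ℂ) := by
    rw [Real.sqrt_eq_rpow, Complex.ofReal_cpow hπt.le]
    norm_num
  have hL : (∑' n : ℤ, Complex.exp (-(π : ℂ) * ((π * t : ℝ) : ℂ) * n ^ 2 +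
      2 * π * (Complex.I * y) * n)) =
      ∑' n : ℤ, Complex.exp (-(π : ℂ) ^ 2 * t * n ^ 2 + 2 * π * Complex.I * n * y) := by
    refine tsum_congr fun n ↦ ?_
    congr 1
    push_cast
    ring
  have hR : (∑' n : ℤ, Complex.exp (-(π : ℂ) / ((π * t : ℝ) : ℂ) *
      ((n : ℂ) + Complex.I * (Complex.I * y)) ^ 2)) =
      ((∑' k : ℤ, Real.exp (-(y + (k : ℝ)) ^ 2 / t) : ℝ) : ℂ) := by
    rw [Complex.ofReal_tsum]
    rw [← (Equiv.neg ℤ).tsum_eq (fun k : ℤ ↦ ((Real.exp (-(y + (k : ℝ)) ^ 2 / t) : ℝ) : ℂ))]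
    refine tsum_congr fun n ↦ ?_
    have h1 : ((n : ℂ) + Complex.I * (Complex.I * y)) = (n : ℂ) - y := by
      rw [← mul_assoc, Complex.I_mul_I]; ring
    have h2 : -(π : ℂ) / ((π * t : ℝ) : ℂ) = -1 / (t : ℂ) := by
      have : ((π : ℝ) : ℂ) ≠ 0 := by
        simpa using Real.pi_ne_zero
      have htne : (t : ℂ) ≠ 0 := by exact_mod_cast ht.ne'
      push_cast
      rw [div_eq_div_iff (mul_ne_zero this htne) htne]
      ring
    rw [h1, h2, Complex.ofReal_exp]
    congr 1
    push_cast [Equiv.neg_apply]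
    ring
  rw [hL, hR, hsq] at key
  have hne : ((Real.sqrt (π * t) : ℝ) : ℂ) ≠ 0 := by
    simpa using (Real.sqrt_pos.mpr hπt).ne'
  rw [key, ← mul_assoc, mul_one_div, div_self hne, one_mul]

/-- The Weyl sum. -/
noncomputable def Sw (x : ℕ → ℝ) (N : ℕ) (ℓ : ℤ) : ℂ :=
  ∑ n ∈ Finset.range N, Complex.exp (2 * (Real.pi : ℂ) * Complex.I * (ℓ : ℂ) * (x n : ℂ))

lemma norm_exp_unit (c : ℝ) (ℓ : ℤ) : ‖Complex.exp (2 * (Real.pi : ℂ) * Complex.I * (ℓ : ℂ) * (c : ℂ))‖ = 1 := by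
  rw [Complex.norm_exp]
  have : (2 * (Real.pi : ℂ) * Complex.I * (ℓ : ℂ) * (c : ℂ)).re = 0 := by
    simp [Complex.mul_re, Complex.mul_im]
  rw [this, Real.exp_zero]

lemma Sw_norm_le (x : ℕ → ℝ) (N : ℕ) (ℓ : ℤ) : ‖Sw x N ℓ‖ ≤ N := by
  calc ‖Sw x N ℓ‖ ≤ ∑ n ∈ Finset.range N,
        ‖Complex.exp (2 * (Real.pi : ℂ) * Complex.I * (ℓ : ℂ) * (x n : ℂ))‖ := norm_sum_le _ _
    _ = N := by simp only [norm_exp_unit]; simp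

lemma Sw_zero (x : ℕ → ℝ) (N : ℕ) : Sw x N 0 = (N : ℂ) := by
  simp [Sw]

-- summability of the spectral series
lemma sumP {t : ℝ} (ht : 0 < t) (x : ℕ → ℝ) (N : ℕ) :
    Summable (fun ℓ : ℤ ↦ Real.exp (-π ^ 2 * t * (ℓ : ℝ) ^ 2) * ‖Sw x N ℓ‖ ^ 2) := by
  have hc : (0 : ℝ) < π ^ 2 * t := by positivity
  refine Summable.of_nonneg_of_le (fun ℓ ↦ by positivity) (fun ℓ ↦ ?_)
    ((sumE hc).mul_right ((N : ℝ) ^ 2))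
  have e : -π ^ 2 * t * (ℓ : ℝ) ^ 2 = -(π ^ 2 * t) * (ℓ : ℝ) ^ 2 := by ring
  rw [e]
  have h1 : ‖Sw x N ℓ‖ ^ 2 ≤ (N : ℝ) ^ 2 := by
    have := Sw_norm_le x N ℓ
    nlinarith [norm_nonneg (Sw x N ℓ)]
  have h2 : (0 : ℝ) ≤ Real.exp (-(π ^ 2 * t) * (ℓ : ℝ) ^ 2) := (Real.exp_pos _).le
  exact mul_le_mul_of_nonneg_left h1 h2

lemma identity (x : ℕ → ℝ) {t : ℝ} (ht : 0 < t) (N : ℕ) :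
    ∑ m ∈ Finset.range N, ∑ n ∈ Finset.range N,
        (∑' k : ℤ, Real.exp (-(x m - x n + (k : ℝ)) ^ 2 / t)) =
      Real.sqrt (π * t) * ∑' ℓ : ℤ, Real.exp (-π ^ 2 * t * (ℓ : ℝ) ^ 2) * ‖Sw x N ℓ‖ ^ 2 := by
  rw [← Complex.ofReal_inj]
  calc ((∑ m ∈ Finset.range N, ∑ n ∈ Finset.range N,
        (∑' k : ℤ, Real.exp (-(x m - x n + (k : ℝ)) ^ 2 / t)) : ℝ) : ℂ)
      = ∑ m ∈ Finset.range N, ∑ n ∈ Finset.range N,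
        ((∑' k : ℤ, Real.exp (-(x m - x n + (k : ℝ)) ^ 2 / t) : ℝ) : ℂ) := by
        push_cast
        rfl
    _ = ∑ m ∈ Finset.range N, ∑ n ∈ Finset.range N, ((Real.sqrt (π * t) : ℝ) : ℂ) *
          ∑' ℓ : ℤ, Complex.exp (-(π : ℂ) ^ 2 * t * ℓ ^ 2 +
            2 * π * Complex.I * ℓ * ((x m - x n : ℝ) : ℂ)) := by
        exact Finset.sum_congr rfl fun m _ ↦ Finset.sum_congr rfl fun n _ ↦
          poisson ht (x m - x n)
    _ = ((Real.sqrt (π * t) : ℝ) : ℂ) * ∑' ℓ : ℤ, ∑ m ∈ Finset.range N, ∑ n ∈ Finset.range N,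
          Complex.exp (-(π : ℂ) ^ 2 * t * ℓ ^ 2 +
            2 * π * Complex.I * ℓ * ((x m - x n : ℝ) : ℂ)) := by
        simp_rw [← Finset.mul_sum]
        congr 1
        have inner : ∀ m, ∑ n ∈ Finset.range N, ∑' ℓ : ℤ,
            Complex.exp (-(π : ℂ) ^ 2 * t * ℓ ^ 2 +
              2 * π * Complex.I * ℓ * ((x m - x n : ℝ) : ℂ)) =
            ∑' ℓ : ℤ, ∑ n ∈ Finset.range N,
            Complex.exp (-(π : ℂ) ^ 2 * t * ℓ ^ 2 +
              2 * π * Complex.I * ℓ * ((x m - x n : ℝ) : ℂ)) :=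
          fun m ↦ (Summable.tsum_finsetSum fun n _ ↦ sumF ht (x m - x n)).symm
        simp_rw [inner]
        exact (Summable.tsum_finsetSum fun m _ ↦ summable_sum fun n _ ↦ sumF ht (x m - x n)).symm
    _ = ((Real.sqrt (π * t) : ℝ) : ℂ) *
          ∑' ℓ : ℤ, ((Real.exp (-π ^ 2 * t * (ℓ : ℝ) ^ 2) * ‖Sw x N ℓ‖ ^ 2 : ℝ) : ℂ) := by
        congr 1
        refine tsum_congr fun ℓ ↦ ?_
        have hfac : ∀ m n : ℕ, Complex.exp (-(π : ℂ) ^ 2 * t * ℓ ^ 2 +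
            2 * π * Complex.I * ℓ * ((x m - x n : ℝ) : ℂ)) =
            Complex.exp (-(π : ℂ) ^ 2 * t * ℓ ^ 2) *
              (Complex.exp (2 * (Real.pi : ℂ) * Complex.I * (ℓ : ℂ) * (x m : ℂ)) *
               Complex.exp (-(2 * (Real.pi : ℂ) * Complex.I * (ℓ : ℂ) * (x n : ℂ)))) := by
          intro m n
          rw [← Complex.exp_add, ← Complex.exp_add]
          congr 1
          push_cast
          ring
        simp_rw [hfac, ← Finset.mul_sum, ← Finset.sum_mul]
        have hconj : ∑ n ∈ Finset.range N,
            Complex.exp (-(2 * (Real.pi : ℂ) * Complex.I * (ℓ : ℂ) * (x n : ℂ))) =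
            (starRingEnd ℂ) (Sw x N ℓ) := by
          rw [Sw, map_sum]
          refine Finset.sum_congr rfl fun n _ ↦ ?_
          rw [← Complex.exp_conj]
          congr 1
          have hc : (starRingEnd ℂ) (2 * (Real.pi : ℂ) * Complex.I * (ℓ : ℂ) * (x n : ℂ)) =
              2 * (Real.pi : ℂ) * (-Complex.I) * (ℓ : ℂ) * (x n : ℂ) := by
            simp only [map_mul, Complex.conj_I, Complex.conj_ofReal, map_intCast, map_ofNat]
          rw [hc]
          ring
        rw [hconj]
        have hSw : Sw x N ℓ = ∑ m ∈ Finset.range N,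
            Complex.exp (2 * (Real.pi : ℂ) * Complex.I * (ℓ : ℂ) * (x m : ℂ)) := rfl
        rw [← hSw, Complex.mul_conj, Complex.normSq_eq_norm_sq]
        rw [show Complex.exp (-(π : ℂ) ^ 2 * t * ℓ ^ 2) =
            ((Real.exp (-π ^ 2 * t * (ℓ : ℝ) ^ 2) : ℝ) : ℂ) by
          rw [Complex.ofReal_exp]; congr 1; push_cast; ring]
        rw [← Complex.ofReal_mul]
    _ = ((Real.sqrt (π * t) * ∑' ℓ : ℤ,
          Real.exp (-π ^ 2 * t * (ℓ : ℝ) ^ 2) * ‖Sw x N ℓ‖ ^ 2 : ℝ) : ℂ) := by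
        rw [← Complex.ofReal_tsum]
        push_cast
        rfl

noncomputable def CC : ℝ := ∑' j : ℤ, Real.exp (-(1 / 8 : ℝ) * (j : ℝ) ^ 2)

lemma CC_nonneg : 0 ≤ CC := tsum_nonneg fun _ ↦ (Real.exp_pos _).le

lemma Greindex {t : ℝ} (y : ℝ) :
    ∑' k : ℤ, Real.exp (-(y + (k : ℝ)) ^ 2 / t)
      = ∑' j : ℤ, Real.exp (-(signedCircleDist y + (j : ℝ)) ^ 2 / t) := by
  rw [← (Equiv.subRight (round y)).tsum_eq
    (fun k : ℤ ↦ Real.exp (-(y + (k : ℝ)) ^ 2 / t))]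
  refine tsum_congr fun j ↦ ?_
  congr 2
  simp only [signedCircleDist, Equiv.subRight_apply]
  push_cast
  ring

lemma G_lower {t : ℝ} (ht : 0 < t) (y : ℝ) :
    Real.exp (-(signedCircleDist y) ^ 2 / t) ≤
      ∑' k : ℤ, Real.exp (-(y + (k : ℝ)) ^ 2 / t) := by
  rw [Greindex]
  have h := Summable.le_tsum (sumG ht (signedCircleDist y)) 0 (fun j _ ↦ (Real.exp_pos _).le)
  simpa using h

lemma G_upper {t : ℝ} (ht : 0 < t) (ht1 : t ≤ 1) (y : ℝ) :
    ∑' k : ℤ, Real.exp (-(y + (k : ℝ)) ^ 2 / t) ≤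
      Real.exp (-(signedCircleDist y) ^ 2 / t) + CC * Real.exp (-(1 / (8 * t))) := by
  set u := signedCircleDist y with hu
  rw [Greindex, Summable.tsum_eq_add_tsum_ite (sumG ht u) 0]
  have hf0 : Real.exp (-(u + ((0 : ℤ) : ℝ)) ^ 2 / t) = Real.exp (-u ^ 2 / t) := by norm_num
  rw [hf0]
  refine add_le_add (le_refl _) ?_
  have hsum2 : Summable (fun j : ℤ ↦ Real.exp (-(1 / (8 * t))) * Real.exp (-(1 / 8 : ℝ) * (j : ℝ) ^ 2)) :=
    (sumE (by norm_num : (0:ℝ) < 1/8)).mul_left _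
  have hterm : ∀ j : ℤ, (if j = 0 then 0 else Real.exp (-(u + (j : ℝ)) ^ 2 / t)) ≤
      Real.exp (-(1 / (8 * t))) * Real.exp (-(1 / 8 : ℝ) * (j : ℝ) ^ 2) := by
    intro j
    by_cases hj : j = 0
    · simp only [hj, if_pos]
      positivity
    · rw [if_neg hj, ← Real.exp_add, Real.exp_le_exp]
      have habs : |u| ≤ 1 / 2 := by rw [hu]; exact abs_sub_round y
      have hj1 : (1 : ℝ) ≤ |(j : ℝ)| := by
        rw [← Int.cast_abs]
        exact_mod_cast Int.one_le_abs hj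
      have habs2 : |(j : ℝ)| ≤ |u + (j : ℝ)| + |u| := by
        calc |(j : ℝ)| = |(u + (j : ℝ)) + (-u)| := by ring_nf
          _ ≤ |u + (j : ℝ)| + |-u| := abs_add_le _ _
          _ = |u + (j : ℝ)| + |u| := by rw [abs_neg]
      have h4 : |(j : ℝ)| / 2 ≤ |u + (j : ℝ)| := by linarith
      have h5 : (j : ℝ) ^ 2 / 4 ≤ (u + (j : ℝ)) ^ 2 := by
        nlinarith [sq_abs (u + (j : ℝ)), sq_abs ((j : ℝ)), abs_nonneg (u + (j : ℝ)),
          abs_nonneg ((j : ℝ))]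
      have hj2 : (1 : ℝ) ≤ (j : ℝ) ^ 2 := by nlinarith [sq_abs ((j : ℝ))]
      rw [div_le_iff₀ ht]
      have hcl : (1 / (8 * t)) * t = 1 / 8 := by
        field_simp
      nlinarith [ht.le, sq_nonneg ((j : ℝ))]
  calc (∑' j : ℤ, if j = 0 then (0:ℝ) else Real.exp (-(u + (j : ℝ)) ^ 2 / t))
      ≤ ∑' j : ℤ, Real.exp (-(1 / (8 * t))) * Real.exp (-(1 / 8 : ℝ) * (j : ℝ) ^ 2) := by
        refine Summable.tsum_le_tsum hterm ?_ hsum2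
        refine Summable.of_nonneg_of_le (fun j ↦ ?_) hterm hsum2
        by_cases hj : j = 0 <;> simp [hj, (Real.exp_pos _).le]
    _ = CC * Real.exp (-(1 / (8 * t))) := by
        rw [tsum_mul_left, CC, mul_comm]

lemma Elim {t : ℕ → ℝ} (htpos : ∀ N, 0 < t N) (ht0 : Tendsto t atTop (nhds 0)) :
    Tendsto (fun N : ℕ ↦ (1 / Real.sqrt (t N)) * (CC * Real.exp (-(1 / (8 * t N)))))
      atTop (nhds 0) := by
  have hinv : Tendsto (fun N : ℕ ↦ (t N)⁻¹) atTop atTop := by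
    refine tendsto_inv_nhdsGT_zero.comp ?_
    exact tendsto_nhdsWithin_of_tendsto_nhds_of_eventually_within _ ht0
      (Eventually.of_forall fun N ↦ htpos N)
  have hbase := tendsto_rpow_mul_exp_neg_mul_atTop_nhds_zero (1/2) (1/8) (by norm_num)
  have hcomp := (hbase.comp hinv).const_mul CC
  rw [mul_zero] at hcomp
  refine hcomp.congr fun N ↦ ?_
  have hN := htpos N
  have h1 : ((t N)⁻¹) ^ ((1:ℝ)/2) = 1 / Real.sqrt (t N) := by
    rw [← Real.sqrt_eq_rpow, Real.sqrt_inv, one_div]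
  have h2 : -(1/8 : ℝ) * (t N)⁻¹ = -(1 / (8 * t N)) := by
    field_simp
  simp only [Function.comp_apply, h1, h2]
  ring

theorem stmt_13 (x : ℕ → ℝ) (t : ℕ → ℝ) (htpos : ∀ N, 0 < t N)
    (ht0 : Tendsto t atTop (nhds 0))
    (hlim : Tendsto (fun N : ℕ => (1 / (N : ℝ) ^ 2) *
      ∑ m ∈ Finset.range N, ∑ n ∈ Finset.range N,
        (1 / Real.sqrt (t N)) *
          Real.exp (-(signedCircleDist (x m - x n)) ^ 2 / t N))
      atTop (nhds (Real.sqrt π))) :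
    WeylUD x := by
  intro ℓ₀ hℓ₀
  set A : ℕ → ℝ := fun N ↦ (1 / (N : ℝ) ^ 2) *
      ∑ m ∈ Finset.range N, ∑ n ∈ Finset.range N,
        (1 / Real.sqrt (t N)) *
          Real.exp (-(signedCircleDist (x m - x n)) ^ 2 / t N) with hA
  set Θ : ℕ → ℝ := fun N ↦ (1 / (N : ℝ) ^ 2) * (Real.sqrt π *
      ∑' ℓ : ℤ, Real.exp (-π ^ 2 * t N * (ℓ : ℝ) ^ 2) * ‖Sw x N ℓ‖ ^ 2) with hΘ
  set E : ℕ → ℝ := fun N ↦ (1 / Real.sqrt (t N)) * (CC * Real.exp (-(1 / (8 * t N)))) with hE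
  have hE0 : ∀ N, 0 ≤ E N := fun N ↦
    mul_nonneg (by positivity) (mul_nonneg CC_nonneg (Real.exp_pos _).le)
  -- rewrite Θ via the double Gaussian sum
  have hΘeq : ∀ N, Θ N = (1 / (N : ℝ) ^ 2) * ((1 / Real.sqrt (t N)) *
      ∑ m ∈ Finset.range N, ∑ n ∈ Finset.range N,
        (∑' k : ℤ, Real.exp (-(x m - x n + (k : ℝ)) ^ 2 / t N))) := by
    intro N
    simp only [hΘ]
    rw [identity x (htpos N) N]
    have hst : Real.sqrt (t N) ≠ 0 := (Real.sqrt_pos.mpr (htpos N)).ne'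
    rw [Real.sqrt_mul Real.pi_pos.le]
    generalize (∑' ℓ : ℤ, Real.exp (-π ^ 2 * t N * (ℓ : ℝ) ^ 2) * ‖Sw x N ℓ‖ ^ 2) = P
    rw [show (1 / Real.sqrt (t N)) * ((Real.sqrt π * Real.sqrt (t N)) * P)
        = (Real.sqrt (t N) / Real.sqrt (t N)) * (Real.sqrt π * P) by ring,
      div_self hst, one_mul]
  -- lower bound : A ≤ Θ
  have hlow : ∀ N, A N ≤ Θ N := by
    intro N
    rw [hΘeq, hA]
    refine mul_le_mul_of_nonneg_left ?_ (by positivity)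
    rw [Finset.mul_sum]
    refine Finset.sum_le_sum fun m _ ↦ ?_
    rw [Finset.mul_sum]
    refine Finset.sum_le_sum fun n _ ↦ ?_
    exact mul_le_mul_of_nonneg_left (G_lower (htpos N) (x m - x n)) (by positivity)
  -- upper bound : Θ ≤ A + E eventually
  have ht_le1 : ∀ᶠ N in atTop, t N < 1 := ht0.eventually_lt_const one_pos
  have hup : ∀ᶠ N in atTop, Θ N ≤ A N + E N := by
    filter_upwards [ht_le1] with N hN1
    rw [hΘeq, hA]
    have step : (1 / Real.sqrt (t N)) *
        ∑ m ∈ Finset.range N, ∑ n ∈ Finset.range N,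
          (∑' k : ℤ, Real.exp (-(x m - x n + (k : ℝ)) ^ 2 / t N)) ≤
        (∑ m ∈ Finset.range N, ∑ n ∈ Finset.range N,
          (1 / Real.sqrt (t N)) *
            Real.exp (-(signedCircleDist (x m - x n)) ^ 2 / t N)) + (N : ℝ) ^ 2 * E N := by
      rw [Finset.mul_sum]
      simp_rw [Finset.mul_sum]
      have perm : ∀ m n : ℕ, (1 / Real.sqrt (t N)) *
          (∑' k : ℤ, Real.exp (-(x m - x n + (k : ℝ)) ^ 2 / t N)) ≤
          (1 / Real.sqrt (t N)) *
            Real.exp (-(signedCircleDist (x m - x n)) ^ 2 / t N) + E N := by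
        intro m n
        have := mul_le_mul_of_nonneg_left (G_upper (htpos N) hN1.le (x m - x n))
          (by positivity : (0:ℝ) ≤ 1 / Real.sqrt (t N))
        rw [mul_add] at this
        exact this
      calc ∑ m ∈ Finset.range N, ∑ n ∈ Finset.range N, (1 / Real.sqrt (t N)) *
            (∑' k : ℤ, Real.exp (-(x m - x n + (k : ℝ)) ^ 2 / t N))
          ≤ ∑ m ∈ Finset.range N, ∑ n ∈ Finset.range N, ((1 / Real.sqrt (t N)) *
              Real.exp (-(signedCircleDist (x m - x n)) ^ 2 / t N) + E N) :=
            Finset.sum_le_sum fun m _ ↦ Finset.sum_le_sum fun n _ ↦ perm m n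
        _ = (∑ m ∈ Finset.range N, ∑ n ∈ Finset.range N, (1 / Real.sqrt (t N)) *
              Real.exp (-(signedCircleDist (x m - x n)) ^ 2 / t N)) + (N : ℝ) ^ 2 * E N := by
            simp [Finset.sum_add_distrib, Finset.card_range]
            ring
    calc (1 / (N : ℝ) ^ 2) * ((1 / Real.sqrt (t N)) *
          ∑ m ∈ Finset.range N, ∑ n ∈ Finset.range N,
            (∑' k : ℤ, Real.exp (-(x m - x n + (k : ℝ)) ^ 2 / t N)))
        ≤ (1 / (N : ℝ) ^ 2) * ((∑ m ∈ Finset.range N, ∑ n ∈ Finset.range N,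
            (1 / Real.sqrt (t N)) *
              Real.exp (-(signedCircleDist (x m - x n)) ^ 2 / t N)) + (N : ℝ) ^ 2 * E N) :=
          mul_le_mul_of_nonneg_left step (by positivity)
      _ ≤ _ := by
          rw [mul_add]
          refine add_le_add (le_refl _) ?_
          rcases eq_or_ne (N : ℝ) 0 with h | h
          · simp [h, hE0 N]
          · rw [one_div, inv_mul_cancel_left₀ (pow_ne_zero 2 h)]
  -- squeeze : Θ → √π
  have hΘlim : Tendsto Θ atTop (nhds (Real.sqrt π)) := by
    have h2 : Tendsto (fun N ↦ A N + E N) atTop (nhds (Real.sqrt π + 0)) :=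
      hlim.add (Elim htpos ht0)
    rw [add_zero] at h2
    exact tendsto_of_tendsto_of_tendsto_of_le_of_le' hlim h2
      (Eventually.of_forall hlow) hup
  -- extract the ℓ₀ term
  set c : ℕ → ℝ := fun N ↦ Real.sqrt π * (Real.exp (-π ^ 2 * t N * (ℓ₀ : ℝ) ^ 2) *
      (‖Sw x N ℓ₀‖ ^ 2 / (N : ℝ) ^ 2)) with hc
  have hc0 : ∀ N, 0 ≤ c N := fun N ↦ by positivity
  have hcle : ∀ᶠ N in atTop, Real.sqrt π + c N ≤ Θ N := by
    filter_upwards [eventually_ge_atTop 1] with N hN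
    have hN0 : ((N : ℝ) ^ 2) ≠ 0 := by positivity
    have hP : (N : ℝ) ^ 2 + Real.exp (-π ^ 2 * t N * (ℓ₀ : ℝ) ^ 2) * ‖Sw x N ℓ₀‖ ^ 2 ≤
        ∑' ℓ : ℤ, Real.exp (-π ^ 2 * t N * (ℓ : ℝ) ^ 2) * ‖Sw x N ℓ‖ ^ 2 := by
      have h0mem : (0 : ℤ) ∉ ({ℓ₀} : Finset ℤ) := by simp [Ne.symm hℓ₀]
      have hs := Summable.sum_le_tsum ({0, ℓ₀} : Finset ℤ) (fun ℓ _ ↦ by positivity)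
        (sumP (htpos N) x N)
      rw [Finset.sum_insert h0mem, Finset.sum_singleton] at hs
      have h0term : Real.exp (-π ^ 2 * t N * ((0 : ℤ) : ℝ) ^ 2) * ‖Sw x N 0‖ ^ 2
          = (N : ℝ) ^ 2 := by
        rw [Sw_zero]
        simp [Complex.norm_natCast]
      rw [h0term] at hs
      exact hs
    calc Real.sqrt π + c N = (1 / (N : ℝ) ^ 2) * (Real.sqrt π *
          ((N : ℝ) ^ 2 + Real.exp (-π ^ 2 * t N * (ℓ₀ : ℝ) ^ 2) * ‖Sw x N ℓ₀‖ ^ 2)) := by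
          rw [hc]
          field_simp
      _ ≤ Θ N := by
          rw [hΘ]
          exact mul_le_mul_of_nonneg_left
            (mul_le_mul_of_nonneg_left hP (Real.sqrt_nonneg _)) (by positivity)
  have hclim : Tendsto c atTop (nhds 0) := by
    have h2 : Tendsto (fun N ↦ Θ N - Real.sqrt π) atTop (nhds 0) := by
      have := hΘlim.sub (tendsto_const_nhds (x := Real.sqrt π))
      simpa using this
    exact tendsto_of_tendsto_of_tendsto_of_le_of_le' tendsto_const_nhds h2
      (Eventually.of_forall hc0) (hcle.mono fun N h ↦ by linarith)
  -- deduce the normalized Weyl sum tends to 0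
  have hW : Tendsto (fun N ↦ ‖Sw x N ℓ₀‖ ^ 2 / (N : ℝ) ^ 2) atTop (nhds 0) := by
    have hb : Tendsto (fun N ↦ π ^ 2 * t N * (ℓ₀ : ℝ) ^ 2) atTop (nhds 0) := by
      have := (ht0.const_mul (π ^ 2)).mul_const ((ℓ₀ : ℝ) ^ 2)
      simpa using this
    have hexp : Tendsto (fun N ↦ Real.exp (π ^ 2 * t N * (ℓ₀ : ℝ) ^ 2)) atTop (nhds 1) := by
      have := (Real.continuous_exp.tendsto 0).comp hb
      simpa [Function.comp_def] using this
    have hcomb := (hclim.mul hexp).div_const (Real.sqrt π)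
    rw [zero_mul, zero_div] at hcomb
    refine hcomb.congr fun N ↦ ?_
    have hπ0 : Real.sqrt π ≠ 0 := (Real.sqrt_pos.mpr Real.pi_pos).ne'
    have hbb : Real.exp (-π ^ 2 * t N * (ℓ₀ : ℝ) ^ 2) *
        Real.exp (π ^ 2 * t N * (ℓ₀ : ℝ) ^ 2) = 1 := by
      rw [← Real.exp_add]
      ring_nf
      exact Real.exp_zero
    simp only [hc]
    calc Real.sqrt π * (Real.exp (-π ^ 2 * t N * (ℓ₀ : ℝ) ^ 2) * (‖Sw x N ℓ₀‖ ^ 2 / (N : ℝ) ^ 2)) *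
          Real.exp (π ^ 2 * t N * (ℓ₀ : ℝ) ^ 2) / Real.sqrt π
        = (Real.exp (-π ^ 2 * t N * (ℓ₀ : ℝ) ^ 2) * Real.exp (π ^ 2 * t N * (ℓ₀ : ℝ) ^ 2)) *
            (‖Sw x N ℓ₀‖ ^ 2 / (N : ℝ) ^ 2) * (Real.sqrt π / Real.sqrt π) := by ring
      _ = ‖Sw x N ℓ₀‖ ^ 2 / (N : ℝ) ^ 2 := by rw [hbb, div_self hπ0, one_mul, mul_one]
  show Tendsto (fun N : ℕ ↦ (1 / (N : ℂ)) * Sw x N ℓ₀) atTop (nhds 0)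
  rw [tendsto_zero_iff_norm_tendsto_zero]
  have hnorm : ∀ N : ℕ, ‖(1 / (N : ℂ)) * Sw x N ℓ₀‖ =
      Real.sqrt (‖Sw x N ℓ₀‖ ^ 2 / (N : ℝ) ^ 2) := by
    intro N
    rw [show ‖Sw x N ℓ₀‖ ^ 2 / (N : ℝ) ^ 2 = (‖Sw x N ℓ₀‖ / (N : ℝ)) ^ 2 by rw [div_pow]]
    rw [Real.sqrt_sq (by positivity)]
    rw [norm_mul, norm_div, norm_one, Complex.norm_natCast]
    ring
  simp_rw [hnorm]
  have hfinal := (Real.continuous_sqrt.tendsto 0).comp hW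
  rw [Real.sqrt_zero] at hfinal
  exact hfinal
end
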